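/- arXiv:2305.04770 — 5 statements merged into one kernel-verified Lean document; each statement's English description precedes it below -/
import Mathlib

section
/- Let (V, ℓ) be a finite-dimensional non-Archimedean normed vector space over a field k with trivial valuation, and let (v_1,…,v_n) and (w_1,…,w_n) be two orthogonal bases of V with ℓ(v_1) ≤ ℓ(v_2) ≤ … ≤ ℓ(v_n) and ℓ(w_1) ≤ ℓ(w_2) ≤ … ≤ ℓ(w_n). Then ℓ(v_i) = ℓ(w_i) for all i = 1,…,n. -/
/-!
For every level `c`, the sublevel set `{x | ℓ x ≤ c}` is a subspace, and orthogonality of a basis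
says exactly that it is spanned by the basis vectors of length `≤ c`. Hence the number of `v i`
with `ℓ (v i) ≤ c` is the dimension of that subspace, the same for both bases, and two
nondecreasing sequences with the same counting function coincide.
-/

open Classical

section Sublevel

variable {k V α : Type*} [Field k] [AddCommGroup V] [Module k V] [LinearOrder α] [OrderBot α]
  (ℓ : V → α)

def sublevelSubmodule (h0 : ℓ 0 = ⊥) (hsmul : ∀ (a : k) (x : V), a ≠ 0 → ℓ (a • x) = ℓ x)
    (hadd : ∀ x y : V, ℓ (x + y) ≤ max (ℓ x) (ℓ y)) (c : α) : Submodule k V where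
  carrier := {x | ℓ x ≤ c}
  zero_mem' := by simp [h0]
  add_mem' {x y} hx hy := (hadd x y).trans (max_le hx hy)
  smul_mem' a x hx := by
    by_cases ha : a = 0
    · simp [ha, h0]
    · simpa [hsmul a x ha] using hx

variable {ℓ} {ι : Type*} [Fintype ι]

theorem sum_smul_le_iff_of_orthogonal
    (hsmul : ∀ (a : k) (x : V), a ≠ 0 → ℓ (a • x) = ℓ x) {v : ι → V}
    (hvorth : ∀ a : ι → k,
      ℓ (∑ i, a i • v i) = (Finset.univ.filter fun i => a i ≠ 0).sup fun i => ℓ (a i • v i))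
    (a : ι → k) (c : α) :
    ℓ (∑ i, a i • v i) ≤ c ↔ ∀ i, a i ≠ 0 → ℓ (v i) ≤ c := by
  rw [hvorth, Finset.sup_le_iff]
  refine forall_congr' fun i => ?_
  simp only [Finset.mem_filter, Finset.mem_univ, true_and]
  exact imp_congr_right fun hi => by rw [hsmul _ _ hi]

theorem finrank_eq_card_of_orthogonal_basis
    (hsmul : ∀ (a : k) (x : V), a ≠ 0 → ℓ (a • x) = ℓ x) {v : ι → V}
    (hvli : LinearIndependent k v) (hvsp : Submodule.span k (Set.range v) = ⊤)
    (hvorth : ∀ a : ι → k,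
      ℓ (∑ i, a i • v i) = (Finset.univ.filter fun i => a i ≠ 0).sup fun i => ℓ (a i • v i))
    {c : α} {W : Submodule k V} (hW : ∀ x, x ∈ W ↔ ℓ x ≤ c) :
    Module.finrank k W = (Finset.univ.filter fun i => ℓ (v i) ≤ c).card := by
  set b := Module.Basis.mk hvli hvsp.ge
  have hb : ⇑b = v := funext (Module.Basis.mk_apply hvli hvsp.ge)
  have hW_span : W = Submodule.span k (v '' {i | ℓ (v i) ≤ c}) := by
    ext x
    have hx : ∑ i, b.repr x i • v i = x := by simpa [hb] using b.sum_repr x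
    rw [hW, ← hx, sum_smul_le_iff_of_orthogonal hsmul hvorth, hx, ← hb, b.mem_span_image]
    simp [Set.subset_def]
  rw [hW_span, Set.image_eq_range, finrank_span_eq_card (b := fun i : {i | ℓ (v i) ≤ c} => v i)
    (hvli.comp _ Subtype.val_injective), Fintype.card_ofFinset]
  rfl

end Sublevel

theorem Fin.le_of_card_filter_le {α : Type*} [LinearOrder α] {n : ℕ} {f g : Fin n → α}
    (hf : Monotone f) (hg : Monotone g)
    (hcount : ∀ c, (Finset.univ.filter fun j => f j ≤ c).card ≤
      (Finset.univ.filter fun j => g j ≤ c).card)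
    (i : Fin n) : g i ≤ f i := by
  by_contra! hlt
  have h_le : Finset.Iic i ⊆ Finset.univ.filter fun j => f j ≤ f i := fun j hj => by
    simpa using hf (Finset.mem_Iic.mp hj)
  have h_lt : (Finset.univ.filter fun j => g j ≤ f i) ⊆ Finset.Iio i := fun j hj => by
    simp only [Finset.mem_filter, Finset.mem_univ, true_and] at hj
    exact Finset.mem_Iio.mpr (lt_of_not_ge fun hij => (hlt.trans_le (hg hij)).not_ge hj)
  have := (Finset.card_le_card h_le).trans ((hcount (f i)).trans (Finset.card_le_card h_lt))
  rw [Fin.card_Iic, Fin.card_Iio] at this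
  omega

/-- Let `(V, ℓ)` be a finite-dimensional non-Archimedean normed vector space
over a field `k` with trivial valuation (so `ℓ (a • x) = ℓ x` for nonzero scalars `a`,
`ℓ x = ⊥` iff `x = 0`, and `ℓ (x + y) ≤ max (ℓ x) (ℓ y)`).  If `(v 0, …, v (n-1))` and
`(w 0, …, w (n-1))` are two orthogonal bases of `V` with `ℓ (v i)` and `ℓ (w i)` nondecreasing
in `i`, then `ℓ (v i) = ℓ (w i)` for all `i`. -/
theorem stmt_0 {k V : Type*} [Field k] [AddCommGroup V] [Module k V]
    (ℓ : V → EReal)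
    (hbot : ∀ x : V, ℓ x = ⊥ ↔ x = 0)
    (hsmul : ∀ (a : k) (x : V), a ≠ 0 → ℓ (a • x) = ℓ x)
    (hadd : ∀ x y : V, ℓ (x + y) ≤ max (ℓ x) (ℓ y))
    {n : ℕ} (v w : Fin n → V)
    (hvli : LinearIndependent k v)
    (hvsp : Submodule.span k (Set.range v) = ⊤)
    (hwli : LinearIndependent k w)
    (hwsp : Submodule.span k (Set.range w) = ⊤)
    (hvorth : ∀ a : Fin n → k,
      ℓ (∑ i, a i • v i) =
        (Finset.univ.filter fun i => a i ≠ 0).sup fun i => ℓ (a i • v i))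
    (hworth : ∀ a : Fin n → k,
      ℓ (∑ i, a i • w i) =
        (Finset.univ.filter fun i => a i ≠ 0).sup fun i => ℓ (a i • w i))
    (hvmono : Monotone fun i => ℓ (v i))
    (hwmono : Monotone fun i => ℓ (w i)) :
    ∀ i, ℓ (v i) = ℓ (w i) := by
  have hcount (c : EReal) :
      (Finset.univ.filter fun j => ℓ (v j) ≤ c).card =
        (Finset.univ.filter fun j => ℓ (w j) ≤ c).card := by
    let W := sublevelSubmodule ℓ ((hbot 0).mpr rfl) hsmul hadd c
    have hW : ∀ x, x ∈ W ↔ ℓ x ≤ c := fun _ => Iff.rfl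
    rw [← finrank_eq_card_of_orthogonal_basis hsmul hvli hvsp hvorth hW,
      ← finrank_eq_card_of_orthogonal_basis hsmul hwli hwsp hworth hW]
  intro i
  exact le_antisymm (Fin.le_of_card_filter_le hwmono hvmono (fun c => (hcount c).ge) i)
    (Fin.le_of_card_filter_le hvmono hwmono (fun c => (hcount c).le) i)
end

section
/- Let (V_1, ℓ_1), (V_2, ℓ_2), (W, ℓ_W) be orthogonalizable non-Archimedean normed spaces over a field k, and set C = V_1 ⊕ W with ℓ_C = ℓ_1 ⊕ ℓ_W and D = V_2 ⊕ W with ℓ_D = ℓ_2 ⊕ ℓ_W, where (ℓ ⊕ ℓ')(a,b) = max(ℓ(a), ℓ'(b)). Suppose ∂_C: C → C and ∂_D: D → D are norm-nonincreasing differentials (∂² = 0), and suppose there exist constants η > 0 and E > 0 such that (1) ℓ_j(v) ≤ E < ℓ_W(w) for all nonzero v ∈ V_j (j = 1,2) and nonzero w ∈ W, and (2) ℓ_W(π_W(∂_C w) − π_W(∂_D w)) < ℓ_W(w) − η for all w ∈ W, where π_W is the projection to W. For each complex, let its 'verbose barcode' be given by a singular-value-decomposition basis {x_i, y_j, z_j}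 with ∂ x_i = 0 and ∂ z_j = y_j, and let C^{<η}_E (resp. D^{<η}_E) be the multiset of intervals (ℓ(y_j), ℓ(z_j)] with ℓ(z_j) − ℓ(y_j) < η and ℓ(y_j) > E. Then C^{<η}_E = D^{<η}_E as multisets. -/
open Classical

/-- Axioms of a non-Archimedean norm (over a field with trivial valuation). -/
def IsNAName {k V : Type*} [Field k] [AddCommGroup V] [Module k V] (ℓ : V → EReal) : Prop :=
  (∀ x : V, ℓ x = ⊥ ↔ x = 0) ∧
  (∀ (a : k) (x : V), a ≠ 0 → ℓ (a • x) = ℓ x) ∧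
  (∀ x y : V, ℓ (x + y) ≤ max (ℓ x) (ℓ y))

/-- Orthogonality of a finite family with respect to a non-Archimedean norm. -/
def IsOrthFamily {k V : Type*} [Field k] [AddCommGroup V] [Module k V] (ℓ : V → EReal)
    {ι : Type*} [Fintype ι] (v : ι → V) : Prop :=
  ∀ a : ι → k,
    ℓ (∑ i, a i • v i) = (Finset.univ.filter fun i => a i ≠ 0).sup fun i => ℓ (a i • v i)

/-!
Write `A_C, A_D : W → W` for the `W`-blocks of the two differentials. Since `V₁` lies below
level `E` and `W \ 0` above it, an SVD basis of `C` shows that `dim (A_C W_{≤t} ∩ W_{≤s})` is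
the number of bars `(ℓ y, ℓ z]` with `E < ℓ y ≤ s` and `ℓ z ≤ t`, and likewise for `D`. The
multiplicity of a bar `(a, b]` is an alternating sum of four such counts, at `a`, `b` and the
next smaller values `a'`, `b'` of the norms. When `b - a < η`, hypothesis (2) says that
`A_C - A_D` maps `W_{≤b}` into `W_{<a} = W_{≤a'}`, and rank-nullity then shows that
`dim (A U ∩ W_{≤a}) - dim (A U ∩ W_{≤a'})` is the same for `A = A_C` and `A = A_D`, for both
`U = W_{≤b}` and `U = W_{≤b'}`.
-/

open Finset Submodule Module

namespace IsNAName

variable {k V : Type*} [Field k] [AddCommGroup V] [Module k V] {ℓ : V → EReal}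

lemma map_zero (h : IsNAName (k := k) ℓ) : ℓ 0 = ⊥ := (h.1 0).2 rfl

lemma le_of_forall_ne_zero (h : IsNAName (k := k) ℓ) {E : EReal} (hE : ∀ v, v ≠ 0 → ℓ v ≤ E)
    (v : V) : ℓ v ≤ E :=
  (eq_or_ne v 0).elim (fun hv => hv ▸ h.map_zero ▸ bot_le) (hE v)

lemma of_max {W : Type*} [AddCommGroup W] [Module k W] {ℓW : W → EReal} {ℓC : V × W → EReal}
    (hV : IsNAName (k := k) ℓ) (hW : IsNAName (k := k) ℓW)
    (hℓC : ∀ p, ℓC p = max (ℓ p.1) (ℓW p.2)) : IsNAName (k := k) ℓC := by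
  refine ⟨fun p => ?_, fun a p ha => ?_, fun p q => ?_⟩
  · rw [hℓC, _root_.max_eq_bot, hV.1, hW.1, Prod.ext_iff]
    rfl
  · rw [hℓC, hℓC, Prod.smul_fst, Prod.smul_snd, hV.2.1 a _ ha, hW.2.1 a _ ha]
  · simp only [hℓC, Prod.fst_add, Prod.snd_add]
    exact max_le ((hV.2.2 _ _).trans (max_le_max (le_max_left _ _) (le_max_left _ _)))
      ((hW.2.2 _ _).trans (max_le_max (le_max_right _ _) (le_max_right _ _)))

def sublevel (h : IsNAName (k := k) ℓ) (t : EReal) : Submodule k V where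
  carrier := {v | ℓ v ≤ t}
  add_mem' ha hb := (h.2.2 _ _).trans (max_le ha hb)
  zero_mem' := by simp [h.map_zero]
  smul_mem' c v hv := by
    rcases eq_or_ne c 0 with rfl | hc
    · simp [h.map_zero]
    · exact (h.2.1 c v hc).trans_le hv

lemma mem_sublevel {h : IsNAName (k := k) ℓ} {t : EReal} {v : V} :
    v ∈ h.sublevel t ↔ ℓ v ≤ t := Iff.rfl

lemma sublevel_mono (h : IsNAName (k := k) ℓ) {t t' : EReal} (htt' : t ≤ t') :
    h.sublevel t ≤ h.sublevel t' := fun _ hv => le_trans hv htt'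

end IsNAName

def IsOrthOn (k : Type*) {V ι : Type*} [Field k] [AddCommGroup V] [Module k V]
    (ℓ : V → EReal) (v : ι → V) (S : Finset ι) : Prop :=
  ∀ a : ι → k, ℓ (∑ i ∈ S, a i • v i) = (S.filter fun i => a i ≠ 0).sup fun i => ℓ (v i)

section Orthogonal

variable {k V ι : Type*} [Field k] [AddCommGroup V] [Module k V] {ℓ : V → EReal} {v : ι → V}

lemma IsOrthFamily.isOrthOn_univ [Fintype ι] (hna : IsNAName (k := k) ℓ)
    (h : IsOrthFamily (k := k) ℓ v) : IsOrthOn k ℓ v univ := fun a => by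
  rw [h a]
  exact sup_congr rfl fun i hi => hna.2.1 _ _ (mem_filter.1 hi).2

namespace IsOrthOn

variable {S : Finset ι}

lemma mono (h : IsOrthOn k ℓ v S) {S' : Finset ι} (hS' : S' ⊆ S) : IsOrthOn k ℓ v S' := by
  intro a
  have := h fun i => if i ∈ S' then a i else 0
  simp only [ite_smul, zero_smul, sum_ite_mem, inter_eq_right.2 hS'] at this
  rw [this]
  congr 1
  ext i
  by_cases hi : i ∈ S'
  · simp [hi, hS' hi]
  · simp [hi]

lemma comp {κ : Type*} (h : IsOrthOn k ℓ v S) (e : κ ↪ ι) {T : Finset κ} (hT : T.map e = S) :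
    IsOrthOn k ℓ (v ∘ e) T := by
  intro a
  have := h (Function.extend e a 0)
  simp only [← hT, sum_map, filter_map, sup_map, Function.comp_def,
    e.injective.extend_apply] at this
  exact this

lemma apply_le (h : IsOrthOn k ℓ v S) {a : ι → k} {i : ι} (hi : i ∈ S)
    (hai : a i ≠ 0) : ℓ (v i) ≤ ℓ (∑ i ∈ S, a i • v i) := by
  rw [h a]
  exact le_sup (f := fun i => ℓ (v i)) (mem_filter.2 ⟨hi, hai⟩)

lemma linearIndepOn (hna : IsNAName (k := k) ℓ) (h : IsOrthOn k ℓ v S)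
    (hv : ∀ i ∈ S, v i ≠ 0) : LinearIndepOn k v S := by
  refine linearIndepOn_finset_iff.2 fun a ha i hi => ?_
  by_contra hai
  have := h.apply_le hi hai
  rw [ha, hna.map_zero, le_bot_iff, hna.1] at this
  exact hv i hi this

lemma span_inf_sublevel (hna : IsNAName (k := k) ℓ) (h : IsOrthOn k ℓ v S) (s : EReal) :
    span k (v '' S) ⊓ hna.sublevel s = span k (v '' (S.filter fun i => ℓ (v i) ≤ s)) := by
  apply le_antisymm
  · rintro x ⟨hx, hxs⟩
    obtain ⟨a, rfl⟩ := (mem_span_image_finset_iff_exists_fun' k).1 hx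
    rw [← sum_filter_of_ne (p := fun i => ℓ (v i) ≤ s) fun i hi hai =>
      (h.apply_le hi (left_ne_zero_of_smul hai)).trans hxs]
    exact sum_mem fun i hi => smul_mem _ _ (subset_span ⟨i, hi, rfl⟩)
  · refine le_inf (span_mono (Set.image_mono (filter_subset _ _))) (span_le.2 ?_)
    rintro _ ⟨i, hi, rfl⟩
    exact (mem_filter.1 hi).2

lemma finrank_span_inf_sublevel (hna : IsNAName (k := k) ℓ) (h : IsOrthOn k ℓ v S)
    (hv : ∀ i ∈ S, v i ≠ 0) (s : EReal) :
    finrank k ↥(span k (v '' S) ⊓ hna.sublevel s) = #(S.filter fun i => ℓ (v i) ≤ s) := by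
  rw [h.span_inf_sublevel hna, Set.image_eq_range, finrank_span_eq_card
    ((h.linearIndepOn hna hv).mono (filter_subset _ _))]
  simp

end IsOrthOn

end Orthogonal

section LargestBelow

variable {α : Type*} [LinearOrder α] [OrderBot α]

def largestBelow (T : Finset α) (a : α) : α := (T.filter (· < a)).sup id

lemma le_largestBelow {T : Finset α} {a x : α} (hx : x ∈ T) (hxa : x < a) :
    x ≤ largestBelow T a :=
  le_sup (f := id) (mem_filter.2 ⟨hx, hxa⟩)

lemma largestBelow_lt (T : Finset α) {a : α} (ha : ⊥ < a) : largestBelow T a < a :=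
  (Finset.sup_lt_iff ha).2 fun _ hx => (mem_filter.1 hx).2

end LargestBelow

section SVD

variable {k V ι κ : Type*} [Field k] [AddCommGroup V] [Module k V] [Fintype ι] [Fintype κ]
  {ℓ : V → EReal} {v : ι → V}

lemma IsOrthFamily.apply_mem (hna : IsNAName (k := k) ℓ)
    (hsp : span k (Set.range v) = ⊤) (h : IsOrthFamily (k := k) ℓ v) (c : V) :
    ℓ c ∈ insert ⊥ (univ.image fun i => ℓ (v i)) := by
  obtain ⟨a, rfl⟩ := (mem_span_range_iff_exists_fun k).1 (hsp ▸ mem_top (x := c))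
  rw [h.isOrthOn_univ hna a]
  rcases (univ.filter fun i => a i ≠ 0).eq_empty_or_nonempty with he | hne
  · simp [he]
  · obtain ⟨i, -, hi⟩ := exists_mem_eq_sup _ hne fun i => ℓ (v i)
    exact mem_insert_of_mem (hi ▸ mem_image_of_mem _ (mem_univ i))

lemma IsOrthFamily.map_mem_span_of_svd {x : ι → V} {y z : κ → V} (hna : IsNAName (k := k) ℓ)
    (hsp : span k (Set.range (Sum.elim x (Sum.elim y z))) = ⊤)
    (h : IsOrthFamily (k := k) ℓ (Sum.elim x (Sum.elim y z)))
    {D : V →ₗ[k] V} (hD2 : ∀ c, D (D c) = 0) (hx : ∀ i, D (x i) = 0) (hz : ∀ j, D (z j) = y j)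
    (c : V) : D c ∈ span k (y '' {j | ℓ (z j) ≤ ℓ c}) := by
  obtain ⟨a, rfl⟩ := (mem_span_range_iff_exists_fun k).1 (hsp ▸ mem_top (x := c))
  have hy : ∀ j, D (y j) = 0 := fun j => hz j ▸ hD2 (z j)
  have hDc : D (∑ i, a i • Sum.elim x (Sum.elim y z) i) = ∑ j, a (.inr (.inr j)) • y j := by
    simp [Fintype.sum_sum_type, hx, hy, hz]
  rw [hDc]
  refine sum_mem fun j _ => ?_
  by_cases ha : a (.inr (.inr j)) = 0
  · simp [ha]
  · exact smul_mem _ _ (subset_span ⟨j, (h.isOrthOn_univ hna).apply_le (mem_univ _) ha, rfl⟩)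

end SVD

section FiniteDimensional

variable {k W : Type*} [Field k] [AddCommGroup W] [Module k W] [FiniteDimensional k W]

lemma finrank_inf_comap_eq (A : W →ₗ[k] W) (U S : Submodule k W) :
    finrank k ↥(U ⊓ S.comap A)
      = finrank k ↥(U.map A ⊓ S) + finrank k ↥(U ⊓ LinearMap.ker A) := by
  set P := U ⊓ S.comap A
  have hrange : LinearMap.range (A.domRestrict P) = U.map A ⊓ S := by
    apply le_antisymm
    · rintro _ ⟨⟨w, hwU, hwS⟩, rfl⟩
      exact ⟨mem_map_of_mem hwU, hwS⟩
    · rintro _ ⟨⟨w, hwU, rfl⟩, hwS⟩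
      exact ⟨⟨w, hwU, hwS⟩, rfl⟩
  have hle : U ⊓ LinearMap.ker A ≤ P := fun w ⟨hwU, hwA⟩ =>
    ⟨hwU, show A w ∈ S from (LinearMap.mem_ker.1 hwA).symm ▸ S.zero_mem⟩
  have hker : LinearMap.ker (A.domRestrict P) = (U ⊓ LinearMap.ker A).comap P.subtype := by
    ext w
    simpa using fun _ => w.2.1
  rw [← LinearMap.finrank_range_add_finrank_ker (A.domRestrict P), hrange, hker,
    (comapSubtypeEquivOfLe hle).finrank_eq]

lemma finrank_map_inf_add_eq_of_sub_mem (A B : W →ₗ[k] W) {U S S' : Submodule k W}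
    (hS : S' ≤ S) (hAB : ∀ w ∈ U, A w - B w ∈ S') :
    finrank k ↥(U.map A ⊓ S) + finrank k ↥(U.map B ⊓ S')
      = finrank k ↥(U.map B ⊓ S) + finrank k ↥(U.map A ⊓ S') := by
  have hcomap : ∀ T : Submodule k W, S' ≤ T → U ⊓ T.comap A = U ⊓ T.comap B := by
    intro T hT
    ext w
    simp only [Submodule.mem_inf, mem_comap, and_congr_right_iff]
    intro hwU
    have hw := hT (hAB w hwU)
    exact ⟨fun hA => by simpa using sub_mem hA hw, fun hB => by simpa using add_mem hB hw⟩
  have e1 := finrank_inf_comap_eq A U S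
  have e2 := finrank_inf_comap_eq A U S'
  have e3 := finrank_inf_comap_eq B U S
  have e4 := finrank_inf_comap_eq B U S'
  rw [hcomap S hS] at e1
  rw [hcomap S' le_rfl] at e2
  omega

end FiniteDimensional

section BarCount

variable {α ι : Type*} [LinearOrder α] [Fintype ι]

def barCount (E : α) (Y Z : ι → α) (s t : α) : ℕ := #{j | E < Y j ∧ Y j ≤ s ∧ Z j ≤ t}

lemma card_add_barCount_add_barCount {E a b a' b' : α} {Y Z : ι → α} (hEa : E < a)
    (ha' : a' < a) (hb' : b' < b) (hY : ∀ j, Y j < a → Y j ≤ a') (hZ : ∀ j, Z j < b → Z j ≤ b') :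
    #{j | Y j = a ∧ Z j = b} + barCount E Y Z a' b + barCount E Y Z a b'
      = barCount E Y Z a b + barCount E Y Z a' b' := by
  simp only [barCount, card_filter, ← sum_add_distrib]
  refine sum_congr rfl fun j _ => ?_
  have := hY j
  have := hZ j
  split_ifs <;> grind

end BarCount

lemma Finset.map_val_filter_eq_of_card_eq {ι κ β : Type*} [Fintype ι] [Fintype κ] {f : ι → β}
    {g : κ → β} {Q : β → Prop} [DecidablePred Q]
    (h : ∀ x, Q x → #{i | f i = x} = #{j | g j = x}) :
    (univ.filter fun i => Q (f i)).val.map f = (univ.filter fun j => Q (g j)).val.map g := by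
  change (univ.val.filter (Q ∘ f)).map f = (univ.val.filter (Q ∘ g)).map g
  rw [← Multiset.filter_map, ← Multiset.filter_map]
  ext x
  rw [Multiset.count_filter, Multiset.count_filter]
  split_ifs with hx
  · simp only [Multiset.count_map, ← filter_val, card_val]
    simpa only [eq_comm] using h x hx
  · rfl

lemma card_bar_eq_of_finrank {k W ι κ : Type*} [Field k] [AddCommGroup W] [Module k W]
    [FiniteDimensional k W] [Fintype ι] [Fintype κ] {ℓ : W → EReal} (hna : IsNAName (k := k) ℓ)
    {A B : W →ₗ[k] W} {YA ZA : ι → EReal} {YB ZB : κ → EReal} {E : EReal}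
    (hA : ∀ s t, finrank k ↥((hna.sublevel t).map A ⊓ hna.sublevel s) = barCount E YA ZA s t)
    (hB : ∀ s t, finrank k ↥((hna.sublevel t).map B ⊓ hna.sublevel s) = barCount E YB ZB s t)
    (hYZA : ∀ j, YA j ≤ ZA j) (hYZB : ∀ j, YB j ≤ ZB j) {T : Finset EReal}
    (hTA : ∀ j, YA j ∈ T ∧ ZA j ∈ T) (hTB : ∀ j, YB j ∈ T ∧ ZB j ∈ T) (hTW : ∀ w, ℓ w ∈ T)
    {a b : EReal} (hEa : E < a) (hAB : ∀ w, ℓ w ≤ b → ℓ (A w - B w) < a) :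
    #{j | YA j = a ∧ ZA j = b} = #{j | YB j = a ∧ ZB j = b} := by
  rcases lt_or_ge b a with hba | hab
  · rw [card_eq_zero.2 (filter_eq_empty_iff.2 fun j _ (h : YA j = a ∧ ZA j = b) =>
        (hYZA j).not_gt (h.1 ▸ h.2 ▸ hba)),
      card_eq_zero.2 (filter_eq_empty_iff.2 fun j _ (h : YB j = a ∧ ZB j = b) =>
        (hYZB j).not_gt (h.1 ▸ h.2 ▸ hba))]
  have ha' := largestBelow_lt T (bot_le.trans_lt hEa)
  have hb' := largestBelow_lt T ((bot_le.trans_lt hEa).trans_le hab)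
  have cross : ∀ t ≤ b, barCount E YA ZA a t + barCount E YB ZB (largestBelow T a) t
      = barCount E YB ZB a t + barCount E YA ZA (largestBelow T a) t := fun t ht => by
    simpa only [hA, hB] using finrank_map_inf_add_eq_of_sub_mem A B (U := hna.sublevel t)
      (hna.sublevel_mono ha'.le) fun w hw =>
        le_largestBelow (hTW _) (hAB w (IsNAName.mem_sublevel.1 hw |>.trans ht))
  have eA := card_add_barCount_add_barCount (Y := YA) (Z := ZA) hEa ha' hb'
    (fun j => le_largestBelow (hTA j).1) (fun j => le_largestBelow (hTA j).2)
  have eB := card_add_barCount_add_barCount (Y := YB) (Z := ZB) hEa ha' hb'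
    (fun j => le_largestBelow (hTB j).1) (fun j => le_largestBelow (hTB j).2)
  have := cross b le_rfl
  have := cross _ hb'.le
  omega

section MaxNorm

variable {V W : Type*} {ℓV : V → EReal} {ℓW : W → EReal} {ℓC : V × W → EReal} {E : EReal}

lemma max_norm_zero_fst {k : Type*} [Field k] [AddCommGroup V] [Module k V]
    (hV : IsNAName (k := k) ℓV) (hℓC : ∀ p, ℓC p = max (ℓV p.1) (ℓW p.2)) (w : W) :
    ℓC (0, w) = ℓW w := by
  rw [hℓC, hV.map_zero]
  exact max_eq_right bot_le

lemma max_norm_eq_snd_of_lt (hℓC : ∀ p, ℓC p = max (ℓV p.1) (ℓW p.2)) (hVE : ∀ v, ℓV v ≤ E)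
    {p : V × W} (hp : E < ℓC p) : ℓC p = ℓW p.2 := by
  have hp1 := hVE p.1
  rw [hℓC] at hp ⊢
  exact max_eq_right (hp1.trans ((lt_max_iff.1 hp).resolve_left hp1.not_gt).le)

lemma snd_eq_zero_of_max_norm_le [Zero W] (hℓC : ∀ p, ℓC p = max (ℓV p.1) (ℓW p.2))
    (hWE : ∀ w, w ≠ 0 → E < ℓW w) {p : V × W} (hp : ℓC p ≤ E) : p.2 = 0 := by
  by_contra h
  exact (hWE _ h).not_ge ((le_max_right _ _).trans (hℓC p ▸ hp))

end MaxNorm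

section SplitComplex

variable {k V W ι κ : Type*} [Field k] [AddCommGroup V] [Module k V] [AddCommGroup W]
  [Module k W] {ℓV : V → EReal} {ℓW : W → EReal}
  {ℓC : V × W → EReal} {E : EReal}

def wBlock (D : V × W →ₗ[k] V × W) : W →ₗ[k] W :=
  LinearMap.snd k V W ∘ₗ D ∘ₗ LinearMap.inr k V W

lemma snd_map_eq_wBlock (hW : IsNAName (k := k) ℓW) (hℓC : ∀ p, ℓC p = max (ℓV p.1) (ℓW p.2))
    (hVE : ∀ v, ℓV v ≤ E) (hWE : ∀ w, w ≠ 0 → E < ℓW w) {D : V × W →ₗ[k] V × W}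
    (hDℓ : ∀ c, ℓC (D c) ≤ ℓC c) (c : V × W) : (D c).2 = wBlock D c.2 := by
  have hV0 : (D (c.1, 0)).2 = 0 := snd_eq_zero_of_max_norm_le hℓC hWE
    ((hDℓ _).trans (by rw [hℓC, hW.map_zero]; exact max_le (hVE _) bot_le))
  conv_lhs => rw [show c = (c.1, 0) + (0, c.2) by simp]
  rw [map_add, Prod.snd_add, hV0, zero_add]
  rfl

lemma map_sublevel_wBlock_eq_span [Fintype ι] [Fintype κ] (hV : IsNAName (k := k) ℓV)
    (hW : IsNAName (k := k) ℓW) (hℓC : ∀ p, ℓC p = max (ℓV p.1) (ℓW p.2)) (hVE : ∀ v, ℓV v ≤ E)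
    (hWE : ∀ w, w ≠ 0 → E < ℓW w) {D : V × W →ₗ[k] V × W} (hD2 : ∀ c, D (D c) = 0)
    (hDℓ : ∀ c, ℓC (D c) ≤ ℓC c) {x : ι → V × W} {y z : κ → V × W}
    (hsp : span k (Set.range (Sum.elim x (Sum.elim y z))) = ⊤)
    (horth : IsOrthFamily (k := k) ℓC (Sum.elim x (Sum.elim y z)))
    (hx : ∀ i, D (x i) = 0) (hz : ∀ j, D (z j) = y j) (t : EReal) :
    (hW.sublevel t).map (wBlock D)
      = span k ((fun j => (y j).2) '' ↑(univ.filter fun j => E < ℓC (y j) ∧ ℓC (z j) ≤ t)) := by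
  apply le_antisymm
  · rintro _ ⟨w, hw, rfl⟩
    have hmem := apply_mem_span_image_of_mem_span (LinearMap.snd k V W)
      (horth.map_mem_span_of_svd (IsNAName.of_max hV hW hℓC) hsp hD2 hx hz (0, w))
    rw [← Set.image_comp] at hmem
    refine span_le.2 ?_ hmem
    rintro _ ⟨j, hj, rfl⟩
    by_cases hE : E < ℓC (y j)
    · refine subset_span ⟨j, ?_, rfl⟩
      simpa [hE] using hj.trans ((max_norm_zero_fst hV hℓC w).trans_le hw)
    · simp [snd_eq_zero_of_max_norm_le hℓC hWE (not_lt.1 hE)]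
  · rw [span_le]
    rintro _ ⟨j, hj, rfl⟩
    have hzt := (by simpa using hj : E < ℓC (y j) ∧ ℓC (z j) ≤ t).2
    rw [hℓC] at hzt
    exact ⟨(z j).2, (le_max_right _ _).trans hzt,
      by simp [← snd_map_eq_wBlock hW hℓC hVE hWE hDℓ, hz]⟩

lemma isOrthOn_snd (hℓC : ∀ p, ℓC p = max (ℓV p.1) (ℓW p.2)) (hVE : ∀ v, ℓV v ≤ E)
    {y : κ → V × W} {S : Finset κ} (hy : IsOrthOn k ℓC y S) (hS : ∀ j ∈ S, E < ℓC (y j)) :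
    IsOrthOn k ℓW (fun j => (y j).2) S := by
  intro a
  have hsum : ∑ j ∈ S, a j • (y j).2 = (∑ j ∈ S, a j • y j).2 := by simp [Prod.snd_sum]
  rw [sup_congr rfl fun j hj => (max_norm_eq_snd_of_lt hℓC hVE (hS j (mem_filter.1 hj).1)).symm,
    hsum]
  rcases (S.filter fun j => a j ≠ 0).eq_empty_or_nonempty with he | ⟨j, hj⟩
  · rw [he, sup_empty]
    refine le_bot_iff.1 ((le_max_right (ℓV (∑ j ∈ S, a j • y j).1) _).trans ?_)
    rw [← hℓC, hy a, he, sup_empty]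
  · obtain ⟨hjS, haj⟩ := mem_filter.1 hj
    rw [← max_norm_eq_snd_of_lt hℓC hVE ((hS j hjS).trans_le (hy.apply_le hjS haj)), hy a]

lemma finrank_map_wBlock_inf_sublevel [Fintype ι] [Fintype κ] (hV : IsNAName (k := k) ℓV)
    (hW : IsNAName (k := k) ℓW) (hℓC : ∀ p, ℓC p = max (ℓV p.1) (ℓW p.2)) (hVE : ∀ v, ℓV v ≤ E)
    (hWE : ∀ w, w ≠ 0 → E < ℓW w) {D : V × W →ₗ[k] V × W} (hD2 : ∀ c, D (D c) = 0)
    (hDℓ : ∀ c, ℓC (D c) ≤ ℓC c) {x : ι → V × W} {y z : κ → V × W}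
    (hsp : span k (Set.range (Sum.elim x (Sum.elim y z))) = ⊤)
    (horth : IsOrthFamily (k := k) ℓC (Sum.elim x (Sum.elim y z)))
    (hx : ∀ i, D (x i) = 0) (hz : ∀ j, D (z j) = y j) (s t : EReal) :
    finrank k ↥((hW.sublevel t).map (wBlock D) ⊓ hW.sublevel s)
      = barCount E (fun j => ℓC (y j)) (fun j => ℓC (z j)) s t := by
  set S := univ.filter fun j => E < ℓC (y j) ∧ ℓC (z j) ≤ t
  have hS : ∀ j ∈ S, E < ℓC (y j) := fun j hj => (mem_filter.1 hj).2.1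
  have hyS : IsOrthOn k ℓC y S :=
    ((horth.isOrthOn_univ (IsNAName.of_max hV hW hℓC)).mono (subset_univ _)).comp
      (Function.Embedding.inl.trans Function.Embedding.inr) rfl
  have hne : ∀ j ∈ S, (y j).2 ≠ 0 := fun j hj h0 => by
    have := max_norm_eq_snd_of_lt hℓC hVE (hS j hj)
    rw [h0, hW.map_zero] at this
    exact not_lt_bot (this ▸ hS j hj)
  rw [map_sublevel_wBlock_eq_span hV hW hℓC hVE hWE hD2 hDℓ hsp horth hx hz,
    (isOrthOn_snd hℓC hVE hyS hS).finrank_span_inf_sublevel hW hne, barCount, filter_filter]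
  refine congrArg card (filter_congr fun j _ => ?_)
  by_cases hE : E < ℓC (y j)
  · rw [← max_norm_eq_snd_of_lt hℓC hVE hE]
    tauto
  · simp [hE]

end SplitComplex

lemma EReal.sub_le_of_sub_lt {a b c : EReal} (ha : a ≠ ⊥) (h : b - a < c) : b - c ≤ a := by
  rcases eq_or_ne a ⊤ with rfl | haT
  · exact le_top
  · exact sub_le_of_le_add (add_comm c a ▸ ((sub_lt_iff (.inl ha) (.inl haT)).1 h).le)

theorem stmt_8_general {k V₁ V₂ W : Type*} [Field k]
    [AddCommGroup V₁] [Module k V₁] [AddCommGroup V₂] [Module k V₂]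
    [AddCommGroup W] [Module k W]
    (ℓ₁ : V₁ → EReal) (ℓ₂ : V₂ → EReal) (ℓW : W → EReal)
    (hℓ₁ : IsNAName (k := k) ℓ₁) (hℓ₂ : IsNAName (k := k) ℓ₂) (hℓW : IsNAName (k := k) ℓW)
    -- the max-norms on C = V₁ ⊕ W and D = V₂ ⊕ W
    (ℓC : V₁ × W → EReal) (hℓC : ∀ p : V₁ × W, ℓC p = max (ℓ₁ p.1) (ℓW p.2))
    (ℓD : V₂ × W → EReal) (hℓD : ∀ p : V₂ × W, ℓD p = max (ℓ₂ p.1) (ℓW p.2))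
    -- norm-nonincreasing differentials
    (DC : V₁ × W →ₗ[k] V₁ × W) (DD : V₂ × W →ₗ[k] V₂ × W)
    (hDC2 : ∀ c, DC (DC c) = 0) (hDD2 : ∀ d, DD (DD d) = 0)
    (hDCℓ : ∀ c, ℓC (DC c) ≤ ℓC c) (hDDℓ : ∀ d, ℓD (DD d) ≤ ℓD d)
    -- the constants η and E
    (η E : ℝ)
    (h1₁ : ∀ v : V₁, v ≠ 0 → ℓ₁ v ≤ (E : EReal))
    (h1₂ : ∀ v : V₂, v ≠ 0 → ℓ₂ v ≤ (E : EReal))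
    (h1W : ∀ w : W, w ≠ 0 → (E : EReal) < ℓW w)
    (h2 : ∀ w : W, w ≠ 0 →
      ℓW ((DC (0, w)).2 - (DD (0, w)).2) < ℓW w - (η : EReal))
    -- a singular value decomposition basis of C
    {NC MC : ℕ} (xC : Fin NC → V₁ × W) (yC zC : Fin MC → V₁ × W)
    (hCsp : Submodule.span k (Set.range (Sum.elim xC (Sum.elim yC zC))) = ⊤)
    (hCorth : IsOrthFamily (k := k) ℓC (Sum.elim xC (Sum.elim yC zC)))
    (hCx : ∀ i, DC (xC i) = 0) (hCz : ∀ j, DC (zC j) = yC j)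
    -- a singular value decomposition basis of D
    {ND MD : ℕ} (xD : Fin ND → V₂ × W) (yD zD : Fin MD → V₂ × W)
    (hDsp : Submodule.span k (Set.range (Sum.elim xD (Sum.elim yD zD))) = ⊤)
    (hDorth : IsOrthFamily (k := k) ℓD (Sum.elim xD (Sum.elim yD zD)))
    (hDx : ∀ i, DD (xD i) = 0) (hDz : ∀ j, DD (zD j) = yD j) :
    ((Finset.univ.filter fun j : Fin MC =>
        ℓC (zC j) - ℓC (yC j) < (η : EReal) ∧ (E : EReal) < ℓC (yC j)).val.map
          fun j => (ℓC (yC j), ℓC (zC j))) =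
      ((Finset.univ.filter fun j : Fin MD =>
        ℓD (zD j) - ℓD (yD j) < (η : EReal) ∧ (E : EReal) < ℓD (yD j)).val.map
          fun j => (ℓD (yD j), ℓD (zD j))) := by
  have hVE₁ := hℓ₁.le_of_forall_ne_zero h1₁
  have hVE₂ := hℓ₂.le_of_forall_ne_zero h1₂
  have : FiniteDimensional k (V₁ × W) :=
    Module.finite_def.2 ⟨(Set.finite_range _).toFinset, by rwa [Set.Finite.coe_toFinset]⟩
  have : FiniteDimensional k W := .of_surjective _ (LinearMap.snd_surjective (M := V₁))
  -- every value of `ℓC`, `ℓD` and `ℓW` lies in this finite set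
  set T := insert ⊥ ((univ.image fun i => ℓC (Sum.elim xC (Sum.elim yC zC) i)) ∪
    univ.image fun i => ℓD (Sum.elim xD (Sum.elim yD zD) i))
  have hTC (i) : ℓC (Sum.elim xC (Sum.elim yC zC) i) ∈ T :=
    mem_insert_of_mem (mem_union_left _ (mem_image_of_mem _ (mem_univ i)))
  have hTD (i) : ℓD (Sum.elim xD (Sum.elim yD zD) i) ∈ T :=
    mem_insert_of_mem (mem_union_right _ (mem_image_of_mem _ (mem_univ i)))
  have hTW (w : W) : ℓW w ∈ T := max_norm_zero_fst hℓ₁ hℓC w ▸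
    insert_subset_insert _ subset_union_left (hCorth.apply_mem (.of_max hℓ₁ hℓW hℓC) hCsp _)
  refine Finset.map_val_filter_eq_of_card_eq
    (Q := fun p : EReal × EReal => p.2 - p.1 < η ∧ E < p.1) fun ⟨a, b⟩ ⟨hba, hEa⟩ => ?_
  simp only [Prod.mk.injEq]
  refine card_bar_eq_of_finrank hℓW (A := wBlock DC) (B := wBlock DD)
    (finrank_map_wBlock_inf_sublevel hℓ₁ hℓW hℓC hVE₁ h1W hDC2 hDCℓ hCsp hCorth hCx hCz)
    (finrank_map_wBlock_inf_sublevel hℓ₂ hℓW hℓD hVE₂ h1W hDD2 hDDℓ hDsp hDorth hDx hDz)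
    (fun j => hCz j ▸ hDCℓ (zC j)) (fun j => hDz j ▸ hDDℓ (zD j))
    (fun j => ⟨hTC (.inr (.inl j)), hTC (.inr (.inr j))⟩)
    (fun j => ⟨hTD (.inr (.inl j)), hTD (.inr (.inr j))⟩) hTW hEa fun w hw => ?_
  have hbη := EReal.sub_le_of_sub_lt (bot_le.trans_lt hEa).ne' hba
  rcases eq_or_ne w 0 with rfl | hw0
  · simpa [hℓW.map_zero] using bot_le.trans_lt hEa
  · exact (h2 w hw0).trans_le ((EReal.sub_le_sub hw le_rfl).trans hbη)

/-- Let `(V₁, ℓ₁)`, `(V₂, ℓ₂)`, `(W, ℓ_W)` be orthogonalizable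
non-Archimedean normed spaces, `C = V₁ ⊕ W` and `D = V₂ ⊕ W` with the max-norms, equipped
with norm-nonincreasing differentials `∂_C`, `∂_D`.  Assume there are `η > 0` and `E > 0`
with (1) `ℓⱼ(v) ≤ E < ℓ_W(w)` for nonzero `v ∈ Vⱼ`, `w ∈ W`, and (2)
`ℓ_W(π_W(∂_C w) − π_W(∂_D w)) < ℓ_W(w) − η` for all (nonzero) `w ∈ W`.  Then the multisets
of finite bars `(ℓ(y_j), ℓ(z_j)]` of length `< η` with left endpoint `> E`, read off from
singular value decomposition bases of `C` and `D`, coincide. -/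
theorem stmt_8 {k V₁ V₂ W : Type*} [Field k]
    [AddCommGroup V₁] [Module k V₁] [AddCommGroup V₂] [Module k V₂]
    [AddCommGroup W] [Module k W]
    (ℓ₁ : V₁ → EReal) (ℓ₂ : V₂ → EReal) (ℓW : W → EReal)
    (hℓ₁ : IsNAName (k := k) ℓ₁) (hℓ₂ : IsNAName (k := k) ℓ₂) (hℓW : IsNAName (k := k) ℓW)
    -- the max-norms on C = V₁ ⊕ W and D = V₂ ⊕ W
    (ℓC : V₁ × W → EReal) (hℓC : ∀ p : V₁ × W, ℓC p = max (ℓ₁ p.1) (ℓW p.2))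
    (ℓD : V₂ × W → EReal) (hℓD : ∀ p : V₂ × W, ℓD p = max (ℓ₂ p.1) (ℓW p.2))
    -- norm-nonincreasing differentials
    (DC : V₁ × W →ₗ[k] V₁ × W) (DD : V₂ × W →ₗ[k] V₂ × W)
    (hDC2 : ∀ c, DC (DC c) = 0) (hDD2 : ∀ d, DD (DD d) = 0)
    (hDCℓ : ∀ c, ℓC (DC c) ≤ ℓC c) (hDDℓ : ∀ d, ℓD (DD d) ≤ ℓD d)
    -- the constants η and E
    (η E : ℝ) (hη : 0 < η) (hE : 0 < E)
    (h1₁ : ∀ v : V₁, v ≠ 0 → ℓ₁ v ≤ (E : EReal))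
    (h1₂ : ∀ v : V₂, v ≠ 0 → ℓ₂ v ≤ (E : EReal))
    (h1W : ∀ w : W, w ≠ 0 → (E : EReal) < ℓW w)
    (h2 : ∀ w : W, w ≠ 0 →
      ℓW ((DC (0, w)).2 - (DD (0, w)).2) < ℓW w - (η : EReal))
    -- a singular value decomposition basis of C
    {NC MC : ℕ} (xC : Fin NC → V₁ × W) (yC zC : Fin MC → V₁ × W)
    (hCli : LinearIndependent k (Sum.elim xC (Sum.elim yC zC)))
    (hCsp : Submodule.span k (Set.range (Sum.elim xC (Sum.elim yC zC))) = ⊤)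
    (hCorth : IsOrthFamily (k := k) ℓC (Sum.elim xC (Sum.elim yC zC)))
    (hCx : ∀ i, DC (xC i) = 0) (hCz : ∀ j, DC (zC j) = yC j)
    -- a singular value decomposition basis of D
    {ND MD : ℕ} (xD : Fin ND → V₂ × W) (yD zD : Fin MD → V₂ × W)
    (hDli : LinearIndependent k (Sum.elim xD (Sum.elim yD zD)))
    (hDsp : Submodule.span k (Set.range (Sum.elim xD (Sum.elim yD zD))) = ⊤)
    (hDorth : IsOrthFamily (k := k) ℓD (Sum.elim xD (Sum.elim yD zD)))
    (hDx : ∀ i, DD (xD i) = 0) (hDz : ∀ j, DD (zD j) = yD j) :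
    ((Finset.univ.filter fun j : Fin MC =>
        ℓC (zC j) - ℓC (yC j) < (η : EReal) ∧ (E : EReal) < ℓC (yC j)).val.map
          fun j => (ℓC (yC j), ℓC (zC j))) =
      ((Finset.univ.filter fun j : Fin MD =>
        ℓD (zD j) - ℓD (yD j) < (η : EReal) ∧ (E : EReal) < ℓD (yD j)).val.map
          fun j => (ℓD (yD j), ℓD (zD j))) :=
  stmt_8_general ℓ₁ ℓ₂ ℓW hℓ₁ hℓ₂ hℓW ℓC hℓC ℓD hℓD DC DD hDC2 hDD2 hDCℓ hDDℓ η E h1₁ h1₂ h1W h2 xC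
    yC zC hCsp hCorth hCx hCz xD yD zD hDsp hDorth hDx hDz
end

section
/- Let U → V → W be an exact sequence of persistence modules, each isomorphic to a finite (or locally finite) direct sum of interval modules. Then for every δ > 0, the number of bars of V of length greater than 2δ is at most the number of bars of U of length greater than δ plus the number of bars of W of length greater than δ: b_{2δ}(V) ≤ b_δ(U) + b_δ(W). -/
universe u u' u'' w w' w'' v

open Classical

structure PersistenceModule (k : Type v) [Field k] where
  V : ℝ → Type u
  [addCommGroup : ∀ t, AddCommGroup (V t)]
  [module : ∀ t, Module k (V t)]
  map : ∀ ⦃s t : ℝ⦄, s ≤ t → V s →ₗ[k] V t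
  map_self : ∀ (t : ℝ) (x : V t), map le_rfl x = x
  map_comp : ∀ ⦃s t r : ℝ⦄ (hst : s ≤ t) (htr : t ≤ r) (x : V s),
    map htr (map hst x) = map (hst.trans htr) x

attribute [instance] PersistenceModule.addCommGroup PersistenceModule.module

noncomputable def intervalFiber (k : Type v) [Field k] (I : Set ℝ) (t : ℝ) : Submodule k k :=
  if t ∈ I then ⊤ else ⊥

/-- The interval persistence module `kI` associated to an interval `I ⊆ ℝ`. -/
noncomputable def intervalModule (k : Type v) [Field k] (I : Set ℝ)
    (hI : I.OrdConnected) : PersistenceModule.{v} k where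
  V t := ↥(intervalFiber k I t)
  map s t h :=
    if ht : t ∈ I then
      LinearMap.codRestrict (intervalFiber k I t) (intervalFiber k I s).subtype
        (fun _ => by simp [intervalFiber, ht])
    else 0
  map_self t x := by
    try dsimp only
    by_cases ht : t ∈ I
    · rw [dif_pos ht]
      apply Subtype.ext
      rfl
    · rw [dif_neg ht]
      have hx : (x : k) ∈ (⊥ : Submodule k k) := by
        have := x.2
        simpa only [intervalFiber, if_neg ht] using this
      apply Subtype.ext
      simpa using (Submodule.mem_bot k).1 hx |>.symm
  map_comp s t r hst htr x := by
    try dsimp only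
    by_cases hr : r ∈ I
    · rw [dif_pos hr, dif_pos hr]
      apply Subtype.ext
      by_cases ht : t ∈ I
      · rw [dif_pos ht]
        rfl
      · rw [dif_neg ht]
        have hs : s ∉ I := fun hs => ht (hI.out hs hr ⟨hst, htr⟩)
        have hx : (x : k) ∈ (⊥ : Submodule k k) := by
          have := x.2
          simpa only [intervalFiber, if_neg hs] using this
        have hx0 : (x : k) = 0 := (Submodule.mem_bot k).1 hx
        exact hx0.symm
    · rw [dif_neg hr, dif_neg hr]
      simp

/-- The direct sum `⊕ᵢ k I_i` of interval modules, as a persistence module. -/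
noncomputable def barcodeModule (k : Type v) [Field k] {ι : Type w} (I : ι → Set ℝ)
    (hI : ∀ i, (I i).OrdConnected) : PersistenceModule.{max w v} k where
  V t := Π₀ i : ι, ↥(intervalFiber k (I i) t)
  map s t h := DFinsupp.mapRange.linearMap fun i => (intervalModule k (I i) (hI i)).map h
  map_self t x := by
    try dsimp only
    ext i
    try rw [DFinsupp.mapRange.linearMap_apply, DFinsupp.mapRange_apply]
    exact congrArg Subtype.val ((intervalModule k (I i) (hI i)).map_self t (x i))
  map_comp s t r hst htr x := by
    try dsimp only
    ext i
    try rw [DFinsupp.mapRange.linearMap_apply, DFinsupp.mapRange_apply,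
      DFinsupp.mapRange.linearMap_apply, DFinsupp.mapRange_apply,
      DFinsupp.mapRange.linearMap_apply, DFinsupp.mapRange_apply]
    exact congrArg Subtype.val ((intervalModule k (I i) (hI i)).map_comp hst htr (x i))

/-- Isomorphism of persistence modules. -/
def PersIso {k : Type v} [Field k] (M : PersistenceModule.{u} k)
    (N : PersistenceModule.{u'} k) : Prop :=
  ∃ e : ∀ t : ℝ, M.V t ≃ₗ[k] N.V t,
    ∀ ⦃s t : ℝ⦄ (h : s ≤ t) (x : M.V s), e t (M.map h x) = N.map h (e s x)

/-!
Choose two points `α < β` with `β - α > 2δ` in each long bar of `V` and split at the midpoint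
`μ`. The generators `x_a` of these bars at the times `α_a` are persistently independent. Their
images in `W` give a coordinate map `k^m → k^{b_δ(W)}` onto the long bars of `W`; its kernel has
dimension at least `m - b_δ(W)`. A reduced echelon basis `γ_q` of the kernel, for the order of the
midpoints, gives combinations `Σ γ_q i • x_i` at time `μ_q` that vanish in `W`: their coordinates on
long bars vanish by construction, and a short bar of `W` cannot carry `g x_i` from `α_i` to `μ_q`.
By exactness they lift to `U`, and the reducedness makes the lifts persistently independent on
windows `[μ_q, β_q]` longer than `δ`. A persistently independent family with windows longer than
`δ` in a barcode module has at most `b_δ` members, so `m - b_δ(W) ≤ b_δ(U)`.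
-/

def longBars {ι : Type w} (I : ι → Set ℝ) (δ : ℝ) : Set ι :=
  {j | ENNReal.ofReal δ < Metric.ediam (I j)}

theorem ofReal_lt_ediam_of_lt_sub {I : Set ℝ} {δ a b : ℝ} (hδ : 0 ≤ δ) (ha : a ∈ I) (hb : b ∈ I)
    (hab : δ < b - a) : ENNReal.ofReal δ < Metric.ediam I := by
  refine lt_of_lt_of_le ?_ (Metric.edist_le_ediam_of_mem hb ha)
  rw [edist_dist, Real.dist_eq, ENNReal.ofReal_lt_ofReal_iff_of_nonneg hδ]
  exact hab.trans_le (le_abs_self _)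

theorem exists_lt_sub_of_ofReal_lt_ediam {I : Set ℝ} {δ : ℝ}
    (h : ENNReal.ofReal δ < Metric.ediam I) : ∃ a ∈ I, ∃ b ∈ I, δ < b - a := by
  obtain ⟨p, hp, q, hq, hpq⟩ : ∃ p ∈ I, ∃ q ∈ I, ENNReal.ofReal δ < edist p q := by
    simpa [Metric.ediam_le_iff] using h.not_ge
  rw [edist_dist, Real.dist_eq, ENNReal.ofReal_lt_ofReal_iff', lt_abs] at hpq
  rcases hpq.1 with hpq | hpq
  · exact ⟨q, hq, p, hp, hpq⟩
  · exact ⟨p, hp, q, hq, by linarith⟩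

theorem Set.encard_le_of_forall_finset_card_le {α : Type*} {s : Set α} {n : ℕ}
    (h : ∀ S : Finset α, ↑S ⊆ s → S.card ≤ n) : s.encard ≤ n := by
  have hs : s.Finite := by
    by_contra hinf
    obtain ⟨S, hS, hcard⟩ := Set.Infinite.exists_subset_card_eq hinf (n + 1)
    have := h S hS
    omega
  rw [hs.encard_eq_coe_toFinset_card, Nat.cast_le]
  exact h _ (by simp)

section Echelon

open Module

variable {k : Type v} [Field k] {ι : Type w}

def Submodule.vanishingOff (K : Submodule k (ι → k)) (s : Finset ι) : Submodule k (ι → k) :=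
  K ⊓ Submodule.pi (↑s)ᶜ fun _ => (⊥ : Submodule k k)

theorem Submodule.mem_vanishingOff {K : Submodule k (ι → k)} {s : Finset ι} {v : ι → k} :
    v ∈ K.vanishingOff s ↔ v ∈ K ∧ ∀ i ∉ s, v i = 0 := by
  simp only [vanishingOff, mem_inf, mem_pi, mem_bot, Set.mem_compl_iff, Finset.mem_coe]

theorem Submodule.vanishingOff_mono {K : Submodule k (ι → k)} {s t : Finset ι} (hst : s ⊆ t) :
    K.vanishingOff s ≤ K.vanishingOff t :=
  fun _ hv => mem_vanishingOff.2
    ⟨(mem_vanishingOff.1 hv).1, fun i hi => (mem_vanishingOff.1 hv).2 i fun his => hi (hst his)⟩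

variable [LinearOrder ι]

def IsReducedEchelon (P : Submodule k (ι → k)) (Q : Finset ι) (γ : ι → ι → k) : Prop :=
  ∀ q ∈ Q, γ q ∈ P ∧ (∀ i, q < i → γ q i = 0) ∧ ∀ q' ∈ Q, γ q q' = if q = q' then 1 else 0

namespace IsReducedEchelon

variable {P P' : Submodule k (ι → k)} {Q : Finset ι} {γ : ι → ι → k} {a : ι} {w : ι → k}

theorem exists_reduced (h : IsReducedEchelon P Q γ) (hPP' : P ≤ P') (hQa : ∀ q ∈ Q, q < a)
    (hw : w ∈ P') (hwa : w a ≠ 0) (hw_gt : ∀ i, a < i → w i = 0) :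
    ∃ w' ∈ P', w' a = 1 ∧ (∀ i, a < i → w' i = 0) ∧ ∀ q ∈ Q, w' q = 0 := by
  have hγ_gt : ∀ q ∈ Q, ∀ i, a ≤ i → γ q i = 0 := fun q hq i hi =>
    (h q hq).2.1 i ((hQa q hq).trans_le hi)
  refine ⟨(w a)⁻¹ • w - ∑ q ∈ Q, ((w a)⁻¹ * w q) • γ q,
    sub_mem (P'.smul_mem _ hw) (P'.sum_mem fun q hq => P'.smul_mem _ (hPP' (h q hq).1)), ?_, ?_, ?_⟩
  · have : ∑ q ∈ Q, (w a)⁻¹ * w q * γ q a = 0 :=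
      Finset.sum_eq_zero fun q hq => by rw [hγ_gt q hq a le_rfl, mul_zero]
    simp [hwa, this]
  · intro i hi
    have : ∑ q ∈ Q, (w a)⁻¹ * w q * γ q i = 0 :=
      Finset.sum_eq_zero fun q hq => by rw [hγ_gt q hq i hi.le, mul_zero]
    simp [hw_gt i hi, this]
  · intro q' hq'
    have : ∑ q ∈ Q, (w a)⁻¹ * w q * γ q q' = (w a)⁻¹ * w q' := by
      rw [Finset.sum_congr rfl fun q hq => by rw [(h q hq).2.2 q' hq']]
      simp [hq']
    simp [this]

theorem insert (h : IsReducedEchelon P Q γ) (hPP' : P ≤ P') (hQa : ∀ q ∈ Q, q < a)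
    (hw : w ∈ P') (hwa : w a = 1) (hw_gt : ∀ i, a < i → w i = 0) (hwQ : ∀ q ∈ Q, w q = 0) :
    IsReducedEchelon P' (insert a Q) (Function.update γ a w) := by
  intro q hq
  rcases Finset.mem_insert.1 hq with rfl | hqQ
  · refine ⟨by simpa using hw, by simpa using hw_gt, fun q' hq' => ?_⟩
    rcases Finset.mem_insert.1 hq' with rfl | hq'Q
    · simpa using hwa
    · simp [hwQ q' hq'Q, (hQa q' hq'Q).ne']
  have hqa : q ≠ a := (hQa q hqQ).ne
  obtain ⟨hγP, hγ_gt, hγQ⟩ := h q hqQ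
  refine ⟨by simpa [hqa] using hPP' hγP, by simpa [hqa] using hγ_gt, fun q' hq' => ?_⟩
  rcases Finset.mem_insert.1 hq' with rfl | hq'Q
  · simp [hqa, hγ_gt q' (hQa q hqQ)]
  · simpa [hqa] using hγQ q' hq'Q

end IsReducedEchelon

namespace Submodule

variable {K : Submodule k (ι → k)} {s : Finset ι} {a : ι}

theorem vanishingOff_insert_eq (h : ∀ v ∈ K.vanishingOff (insert a s), v a = 0) :
    K.vanishingOff (insert a s) = K.vanishingOff s := by
  refine le_antisymm (fun v hv => mem_vanishingOff.2 ⟨(mem_vanishingOff.1 hv).1, fun i hi => ?_⟩)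
    (vanishingOff_mono (Finset.subset_insert a s))
  by_cases hia : i = a
  · exact hia ▸ h v hv
  · exact (mem_vanishingOff.1 hv).2 i (by simp [hia, hi])

variable [Fintype ι]

theorem finrank_vanishingOff_insert_le {w : ι → k} (hw : w ∈ K.vanishingOff (insert a s))
    (hwa : w a = 1) :
    finrank k (K.vanishingOff (insert a s)) ≤ finrank k (K.vanishingOff s) + 1 := by
  have hle : K.vanishingOff (insert a s) ≤ K.vanishingOff s ⊔ k ∙ w := by
    intro v hv
    have hres : v - v a • w ∈ K.vanishingOff s := by
      refine mem_vanishingOff.2 ⟨sub_mem (mem_vanishingOff.1 hv).1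
        (smul_mem _ _ (mem_vanishingOff.1 hw).1), fun i hi => ?_⟩
      by_cases hia : i = a
      · simp [hia, hwa]
      · have hi' : i ∉ insert a s := by simp [hia, hi]
        simp [(mem_vanishingOff.1 hv).2 i hi', (mem_vanishingOff.1 hw).2 i hi']
    exact mem_sup.2 ⟨_, hres, _, smul_mem _ _ (mem_span_singleton_self _), sub_add_cancel _ _⟩
  calc finrank k (K.vanishingOff (insert a s))
      ≤ finrank k ↥(K.vanishingOff s ⊔ k ∙ w) := finrank_mono hle
    _ ≤ finrank k (K.vanishingOff s) + finrank k (k ∙ w) := finrank_add_le_finrank_add_finrank _ _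
    _ = finrank k (K.vanishingOff s) + 1 := by
      rw [finrank_span_singleton fun h => by simp [h] at hwa]

theorem exists_isReducedEchelon_vanishingOff (K : Submodule k (ι → k)) (s : Finset ι) :
    ∃ Q ⊆ s, ∃ γ, IsReducedEchelon (K.vanishingOff s) Q γ ∧
      finrank k (K.vanishingOff s) ≤ Q.card := by
  induction s using Finset.induction_on_max with
  | empty =>
    have : K.vanishingOff ∅ = ⊥ := eq_bot_iff.2 fun v hv => (mem_bot k).2
      (funext fun i => (mem_vanishingOff.1 hv).2 i (Finset.notMem_empty i))
    exact ⟨∅, subset_rfl, fun _ _ => 0, by simp [IsReducedEchelon], by simp [this]⟩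
  | insert a s has ih =>
    obtain ⟨Q, hQs, γ, hγ, hdim⟩ := ih
    have hQa : ∀ q ∈ Q, q < a := fun q hq => has q (hQs hq)
    by_cases hw : ∃ w ∈ K.vanishingOff (insert a s), w a ≠ 0
    · obtain ⟨w, hw, hwa⟩ := hw
      have hw_gt : ∀ i, a < i → w i = 0 := fun i hi => (mem_vanishingOff.1 hw).2 i
        (by simpa [hi.ne'] using fun his => (has i his).not_gt hi)
      obtain ⟨w', hw', hw'a, hw'_gt, hw'Q⟩ :=
        hγ.exists_reduced (vanishingOff_mono (Finset.subset_insert a s)) hQa hw hwa hw_gt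
      refine ⟨insert a Q, Finset.insert_subset_insert a hQs, _,
        hγ.insert (vanishingOff_mono (Finset.subset_insert a s)) hQa hw' hw'a hw'_gt hw'Q, ?_⟩
      rw [Finset.card_insert_of_notMem fun h => (hQa a h).false]
      exact (finrank_vanishingOff_insert_le hw' hw'a).trans (by omega)
    · push Not at hw
      rw [vanishingOff_insert_eq hw]
      exact ⟨Q, hQs.trans (Finset.subset_insert a s), γ, hγ, hdim⟩

theorem exists_isReducedEchelon (K : Submodule k (ι → k)) :
    ∃ (Q : Finset ι) (γ : ι → ι → k), IsReducedEchelon K Q γ ∧ finrank k K ≤ Q.card := by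
  have hK : K.vanishingOff Finset.univ = K := by
    ext v
    simp [mem_vanishingOff]
  obtain ⟨Q, -, γ, hγ, hdim⟩ := exists_isReducedEchelon_vanishingOff K Finset.univ
  exact ⟨Q, γ, hK ▸ hγ, hK ▸ hdim⟩

end Submodule

end Echelon

theorem intervalFiber_coe_eq_zero {k : Type v} [Field k] {I : Set ℝ} {t : ℝ} (h : t ∉ I)
    (y : intervalFiber k I t) : (y : k) = 0 := by
  have hy := y.2
  simp only [intervalFiber, if_neg h] at hy
  exact (Submodule.mem_bot k).1 hy

noncomputable def barcodeCoord (k : Type v) [Field k] {ι : Type w} (I : ι → Set ℝ)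
    (hI : ∀ i, (I i).OrdConnected) (t : ℝ) (j : ι) : (barcodeModule k I hI).V t →ₗ[k] k :=
  (intervalFiber k (I j) t).subtype ∘ₗ DFinsupp.lapply j

noncomputable def barcodeGenerator (k : Type v) [Field k] {ι : Type w} (I : ι → Set ℝ)
    (hI : ∀ i, (I i).OrdConnected) {t : ℝ} {j : ι} (h : t ∈ I j) : (barcodeModule k I hI).V t :=
  DFinsupp.single j ⟨1, by simp [intervalFiber, h]⟩

section Barcode

variable {k : Type v} [Field k] {ι : Type w} {I : ι → Set ℝ} {hI : ∀ i, (I i).OrdConnected}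

theorem barcodeCoord_map {s t : ℝ} (h : s ≤ t) (y : (barcodeModule k I hI).V s) (j : ι) :
    barcodeCoord k I hI t j ((barcodeModule k I hI).map h y) =
      if t ∈ I j then barcodeCoord k I hI s j y else 0 := by
  change Subtype.val ((intervalModule k (I j) (hI j)).map h (DFinsupp.lapply (R := k) j y)) = _
  by_cases ht : t ∈ I j
  · rw [if_pos ht]
    simp only [intervalModule, dif_pos ht]
    rfl
  · rw [if_neg ht]
    exact intervalFiber_coe_eq_zero ht _

theorem barcodeCoord_eq_zero_of_notMem {t : ℝ} {j : ι} (h : t ∉ I j)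
    (y : (barcodeModule k I hI).V t) : barcodeCoord k I hI t j y = 0 :=
  intervalFiber_coe_eq_zero h _

theorem barcodeCoord_barcodeGenerator {t : ℝ} {j : ι} (h : t ∈ I j) (j' : ι) :
    barcodeCoord k I hI t j' (barcodeGenerator k I hI h) = if j = j' then 1 else 0 := by
  change ((DFinsupp.single j _ : Π₀ i, intervalFiber k (I i) t) j' : k) = _
  split_ifs with hj
  · subst hj
    rw [DFinsupp.single_eq_same]
  · rw [DFinsupp.single_eq_of_ne (Ne.symm hj)]
    rfl

end Barcode

namespace PersistenceModule

open Module

variable {k : Type v} [Field k]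

noncomputable def extend (M : PersistenceModule.{u} k) (s t : ℝ) : M.V s →ₗ[k] M.V t :=
  if h : s ≤ t then M.map h else 0

def IsMorphism (M : PersistenceModule.{u} k) (N : PersistenceModule.{u'} k)
    (f : ∀ t, M.V t →ₗ[k] N.V t) : Prop :=
  ∀ ⦃s t : ℝ⦄ (h : s ≤ t) (x : M.V s), f t (M.map h x) = N.map h (f s x)

/-- At each time `τ`, the vectors `x a` with `s a ≤ τ ≤ t a`, pushed to `τ`, are linearly
independent modulo the span of the other pushed vectors. -/
def PersistentlyIndependent (M : PersistenceModule.{u} k) {κ : Type*} [Fintype κ]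
    (s t : κ → ℝ) (x : ∀ a, M.V (s a)) : Prop :=
  ∀ (τ : ℝ) (c : κ → k), ∑ a, c a • M.extend (s a) τ (x a) = 0 →
    ∀ a, s a ≤ τ → τ ≤ t a → c a = 0

section Extend

variable {M : PersistenceModule.{u} k} {s t τ : ℝ}

theorem extend_of_le (h : s ≤ t) : M.extend s t = M.map h := dif_pos h

theorem extend_of_lt (h : t < s) : M.extend s t = 0 := dif_neg h.not_ge

theorem extend_extend (hst : s ≤ t) (htτ : t ≤ τ) (x : M.V s) :
    M.extend t τ (M.extend s t x) = M.extend s τ x := by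
  rw [extend_of_le hst, extend_of_le htτ, extend_of_le (hst.trans htτ), M.map_comp]

theorem IsMorphism.map_extend {N : PersistenceModule.{u'} k} {f : ∀ t, M.V t →ₗ[k] N.V t}
    (hf : IsMorphism M N f) (x : M.V s) : f t (M.extend s t x) = N.extend s t (f s x) := by
  rcases le_or_gt s t with h | h
  · rw [extend_of_le h, extend_of_le h, hf]
  · simp [extend_of_lt h]

end Extend

theorem extend_sum_extend {M : PersistenceModule.{u} k} {κ : Type*} [Fintype κ] {s : κ → ℝ}
    (x : ∀ a, M.V (s a)) (c : κ → k) {t τ : ℝ} (hc : ∀ a, c a ≠ 0 → s a ≤ t) (htτ : t ≤ τ) :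
    M.extend t τ (∑ a, c a • M.extend (s a) t (x a)) = ∑ a, c a • M.extend (s a) τ (x a) := by
  rw [map_sum]
  refine Finset.sum_congr rfl fun a _ => ?_
  by_cases ha : c a = 0
  · simp [ha]
  · rw [map_smul, extend_extend (hc a ha) htτ]

section Barcode

variable {M : PersistenceModule.{u} k} {ι : Type w} {I : ι → Set ℝ}
  {hI : ∀ i, (I i).OrdConnected} {e : ∀ t, M.V t ≃ₗ[k] (barcodeModule k I hI).V t}

theorem eq_zero_of_barcodeCoord_eq_zero {t : ℝ} {y : M.V t}
    (h : ∀ j, barcodeCoord k I hI t j (e t y) = 0) : y = 0 := by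
  refine (e t).map_eq_zero_iff.1 (DFinsupp.ext fun j => Subtype.ext (h j))

theorem barcodeCoord_extend (he : IsMorphism M (barcodeModule k I hI) fun t => (e t).toLinearMap)
    {s τ : ℝ} (h : s ≤ τ) (x : M.V s) (j : ι) :
    barcodeCoord k I hI τ j (e τ (M.extend s τ x)) =
      if τ ∈ I j then barcodeCoord k I hI s j (e s x) else 0 := by
  rw [extend_of_le h]
  exact (congrArg _ (he h x)).trans (barcodeCoord_map h _ j)

theorem sum_extend_eq_zero_of_longBars
    (he : IsMorphism M (barcodeModule k I hI) fun t => (e t).toLinearMap) {δ : ℝ} (hδ : 0 ≤ δ)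
    {κ : Type*} [Fintype κ] {s : κ → ℝ} (y : ∀ a, M.V (s a)) (c : κ → k) {τ : ℝ}
    (hτ : ∀ a, c a ≠ 0 → δ < τ - s a)
    (hlong : ∀ j ∈ longBars I δ, ∑ a, barcodeCoord k I hI (s a) j (e (s a) (y a)) * c a = 0) :
    ∑ a, c a • M.extend (s a) τ (y a) = 0 := by
  refine eq_zero_of_barcodeCoord_eq_zero (e := e) fun j => ?_
  have hterm : ∀ a, c a * barcodeCoord k I hI τ j (e τ (M.extend (s a) τ (y a))) =
      if τ ∈ I j then barcodeCoord k I hI (s a) j (e (s a) (y a)) * c a else 0 := by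
    intro a
    by_cases hca : c a = 0
    · simp [hca]
    rw [barcodeCoord_extend he (by linarith [hτ a hca, hδ])]
    split_ifs <;> ring
  simp only [map_sum, map_smul, smul_eq_mul, hterm]
  by_cases hj : τ ∈ I j
  · simp only [if_pos hj]
    by_cases hjlong : j ∈ longBars I δ
    · exact hlong j hjlong
    refine Finset.sum_eq_zero fun a _ => by_contra fun hne => ?_
    have hsa : s a ∈ I j := by_contra fun h =>
      left_ne_zero_of_mul hne (barcodeCoord_eq_zero_of_notMem h _)
    exact hjlong (ofReal_lt_ediam_of_lt_sub hδ hsa hj (hτ a (right_ne_zero_of_mul hne)))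
  · simp [if_neg hj]

noncomputable def barcodeCoordMatrix (e : ∀ t, M.V t ≃ₗ[k] (barcodeModule k I hI).V t)
    (F : Finset ι) {κ : Type*} {s : κ → ℝ} (y : ∀ a, M.V (s a)) : Matrix F κ k :=
  Matrix.of fun j a => barcodeCoord k I hI (s a) j (e (s a) (y a))

theorem card_le_of_persistentlyIndependent
    (he : IsMorphism M (barcodeModule k I hI) fun t => (e t).toLinearMap) {δ : ℝ} (hδ : 0 ≤ δ)
    {F : Finset ι} (hF : longBars I δ ⊆ F) {κ : Type*} [Fintype κ] {s t : κ → ℝ}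
    (hst : ∀ a, δ < t a - s a) {z : ∀ a, M.V (s a)} (hz : M.PersistentlyIndependent s t z) :
    Fintype.card κ ≤ F.card := by
  have hinj : Function.Injective (barcodeCoordMatrix e F z).mulVecLin := by
    rw [← LinearMap.ker_eq_bot, LinearMap.ker_eq_bot']
    intro c hc
    by_contra hne
    -- at the death time of the last-dying `z a` with `c a ≠ 0`, all of them have lived longer
    -- than `δ`, so the combination is only seen by long bars
    obtain ⟨a₀, ha₀, hmax⟩ := (Finset.univ.filter (c · ≠ 0)).exists_max_image t
      (by simpa [Finset.Nonempty, funext_iff] using hne)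
    have hsum : ∑ a, c a • M.extend (s a) (t a₀) (z a) = 0 :=
      sum_extend_eq_zero_of_longBars he hδ z c
        (fun a ha => (hst a).trans_le (by linarith [hmax a (by simpa using ha)]))
        (fun j hj => congrFun hc ⟨j, hF hj⟩)
    exact (Finset.mem_filter.1 ha₀).2 (hz _ c hsum a₀ (by linarith [hst a₀]) le_rfl)
  simpa using LinearMap.finrank_le_finrank_of_injective hinj

theorem persistentlyIndependent_barcodeGenerator
    (he : IsMorphism M (barcodeModule k I hI) fun t => (e t).toLinearMap)
    {κ : Type*} [Fintype κ] {b : κ → ι} (hb : Function.Injective b) {s t : κ → ℝ}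
    (hs : ∀ a, s a ∈ I (b a)) (ht : ∀ a, t a ∈ I (b a)) :
    M.PersistentlyIndependent s t fun a => (e (s a)).symm (barcodeGenerator k I hI (hs a)) := by
  intro τ c hsum a₀ hs₀ ht₀
  have hτ : τ ∈ I (b a₀) := (hI _).out (hs a₀) (ht a₀) ⟨hs₀, ht₀⟩
  have hterm : ∀ a, c a * barcodeCoord k I hI τ (b a₀)
      (e τ (M.extend (s a) τ ((e (s a)).symm (barcodeGenerator k I hI (hs a))))) =
      if a = a₀ then c a else 0 := by
    intro a
    rcases le_or_gt (s a) τ with h | h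
    · simp [barcodeCoord_extend he h, hτ, barcodeCoord_barcodeGenerator, hb.eq_iff]
    · have : a ≠ a₀ := by rintro rfl; exact h.not_ge hs₀
      simp [extend_of_lt h, this]
  have := congrArg (barcodeCoord k I hI τ (b a₀) ∘ e τ) hsum
  simpa [map_sum, map_smul, hterm] using this

end Barcode

theorem persistentlyIndependent_of_map_eq_sum {U : PersistenceModule.{u} k}
    {V : PersistenceModule.{u'} k} {f : ∀ t, U.V t →ₗ[k] V.V t} (hf : IsMorphism U V f)
    {κ : Type*} [Fintype κ] [DecidableEq κ] {α β : κ → ℝ} {x : ∀ a, V.V (α a)}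
    (hx : V.PersistentlyIndependent α β x) {Q : Finset κ} {γ : κ → κ → k}
    (hγ : ∀ q ∈ Q, ∀ q' ∈ Q, γ q q' = if q = q' then 1 else 0) {μ : κ → ℝ}
    (hsupp : ∀ q ∈ Q, ∀ i, γ q i ≠ 0 → α i ≤ μ q) {u : ∀ q : Q, U.V (μ q)}
    (hu : ∀ q : Q, f (μ q) (u q) = ∑ i, γ q i • V.extend (α i) (μ q) (x i)) :
    U.PersistentlyIndependent (fun q : Q => μ q) (fun q => β q) u := by
  intro τ d hsum q₀ hμ₀ hβ₀
  let c : κ → k := fun i => ∑ q : Q, ((if μ q ≤ τ then d q else 0) * γ q i)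
  have hfq : ∀ q : Q, d q • f τ (U.extend (μ q) τ (u q)) =
      (if μ q ≤ τ then d q else 0) • ∑ i, γ q i • V.extend (α i) τ (x i) := by
    intro q
    rw [hf.map_extend, hu]
    split_ifs with h
    · rw [extend_sum_extend _ _ (hsupp q q.2) h]
    · simp [extend_of_lt (not_le.1 h)]
  have hc : ∑ i, c i • V.extend (α i) τ (x i) = 0 := by
    calc ∑ i, c i • V.extend (α i) τ (x i)
        = ∑ q : Q, d q • f τ (U.extend (μ q) τ (u q)) := by
          simp only [hfq, c, Finset.sum_smul, Finset.smul_sum, mul_smul]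
          exact Finset.sum_comm
      _ = 0 := by simpa only [map_sum, map_smul, map_zero] using congrArg (f τ) hsum
  have hcq₀ : c q₀ = d q₀ := by
    simp only [c]
    rw [Finset.sum_eq_single q₀ (fun q _ hq => by simp [hγ q q.2 q₀ q₀.2,
      Subtype.coe_ne_coe.2 hq]) (by simp)]
    simp [hγ q₀ q₀.2 q₀ q₀.2, hμ₀]
  have hαμ₀ : α q₀ ≤ μ q₀ := hsupp q₀ q₀.2 q₀ (by simp [hγ q₀ q₀.2 q₀ q₀.2])
  exact hcq₀ ▸ hx τ c hc q₀ (hαμ₀.trans hμ₀) hβ₀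

theorem card_le_card_add_card_of_exact {U : PersistenceModule.{u} k}
    {V : PersistenceModule.{u'} k} {W : PersistenceModule.{u''} k}
    {f : ∀ t, U.V t →ₗ[k] V.V t} {g : ∀ t, V.V t →ₗ[k] W.V t} (hf : IsMorphism U V f)
    (hg : IsMorphism V W g) (hexact : ∀ t, LinearMap.range (f t) = LinearMap.ker (g t))
    {ιU : Type w} {IU : ιU → Set ℝ} {hIU : ∀ i, (IU i).OrdConnected}
    {eU : ∀ t, U.V t ≃ₗ[k] (barcodeModule k IU hIU).V t}
    (heU : IsMorphism U (barcodeModule k IU hIU) fun t => (eU t).toLinearMap)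
    {ιW : Type w''} {IW : ιW → Set ℝ} {hIW : ∀ i, (IW i).OrdConnected}
    {eW : ∀ t, W.V t ≃ₗ[k] (barcodeModule k IW hIW).V t}
    (heW : IsMorphism W (barcodeModule k IW hIW) fun t => (eW t).toLinearMap)
    {δ : ℝ} (hδ : 0 ≤ δ) {FU : Finset ιU} (hFU : longBars IU δ ⊆ FU)
    {FW : Finset ιW} (hFW : longBars IW δ ⊆ FW)
    {κ : Type*} [Fintype κ] [LinearOrder κ] {α μ β : κ → ℝ} (hαμ : ∀ a, δ < μ a - α a)
    (hμβ : ∀ a, δ < β a - μ a) (hμ : Monotone μ) {x : ∀ a, V.V (α a)}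
    (hx : V.PersistentlyIndependent α β x) :
    Fintype.card κ ≤ FU.card + FW.card := by
  let Θ := (barcodeCoordMatrix eW FW fun a => g (α a) (x a)).mulVecLin
  obtain ⟨Q, γ, hγ, hdim⟩ := (LinearMap.ker Θ).exists_isReducedEchelon
  have hrank : Fintype.card κ ≤ FW.card + finrank k (LinearMap.ker Θ) := by
    have := LinearMap.finrank_range_add_finrank_ker Θ
    have := Submodule.finrank_le (LinearMap.range Θ)
    simp only [finrank_fintype_fun_eq_card, Fintype.card_coe] at *
    omega
  have hsupp : ∀ q ∈ Q, ∀ i, γ q i ≠ 0 → δ < μ q - α i := fun q hq i hi =>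
    (hαμ i).trans_le (by linarith [hμ (not_lt.1 fun h => hi ((hγ q hq).2.1 i h))])
  have hZ : ∀ q : Q, ∑ i, γ q i • V.extend (α i) (μ q) (x i) ∈ LinearMap.range (f (μ q)) := by
    intro q
    rw [hexact, LinearMap.mem_ker, map_sum]
    simp only [map_smul, hg.map_extend]
    exact sum_extend_eq_zero_of_longBars heW hδ _ (γ q) (hsupp q q.2)
      fun j hj => congrFun (LinearMap.mem_ker.1 (hγ q q.2).1) ⟨j, hFW hj⟩
  choose u hu using hZ
  have hu_indep := persistentlyIndependent_of_map_eq_sum hf hx (fun q hq => (hγ q hq).2.2)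
    (fun q hq i hi => by linarith [hsupp q hq i hi]) hu
  have hQ := card_le_of_persistentlyIndependent heU hδ hFU (fun q : Q => hμβ q) hu_indep
  simp only [Fintype.card_coe] at hQ
  omega

theorem card_le_card_add_card_of_subset_longBars {U V W : PersistenceModule.{u} k}
    {f : ∀ t, U.V t →ₗ[k] V.V t} {g : ∀ t, V.V t →ₗ[k] W.V t} (hf : IsMorphism U V f)
    (hg : IsMorphism V W g) (hexact : ∀ t, LinearMap.range (f t) = LinearMap.ker (g t))
    {ιU : Type w} {IU : ιU → Set ℝ} {hIU : ∀ i, (IU i).OrdConnected}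
    {eU : ∀ t, U.V t ≃ₗ[k] (barcodeModule k IU hIU).V t}
    (heU : IsMorphism U (barcodeModule k IU hIU) fun t => (eU t).toLinearMap)
    {ιV : Type w'} {IV : ιV → Set ℝ} {hIV : ∀ i, (IV i).OrdConnected}
    {eV : ∀ t, V.V t ≃ₗ[k] (barcodeModule k IV hIV).V t}
    (heV : IsMorphism V (barcodeModule k IV hIV) fun t => (eV t).toLinearMap)
    {ιW : Type w''} {IW : ιW → Set ℝ} {hIW : ∀ i, (IW i).OrdConnected}
    {eW : ∀ t, W.V t ≃ₗ[k] (barcodeModule k IW hIW).V t}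
    (heW : IsMorphism W (barcodeModule k IW hIW) fun t => (eW t).toLinearMap)
    {δ : ℝ} (hδ : 0 ≤ δ) {FU : Finset ιU} (hFU : longBars IU δ ⊆ FU)
    {FW : Finset ιW} (hFW : longBars IW δ ⊆ FW) {S : Finset ιV}
    (hS : ↑S ⊆ longBars IV (2 * δ)) :
    S.card ≤ FU.card + FW.card := by
  let bar : Fin S.card → ιV := fun l => S.equivFin.symm l
  have hlong : ∀ l, ∃ a ∈ IV (bar l), ∃ b ∈ IV (bar l), 2 * δ < b - a := fun l =>
    exists_lt_sub_of_ofReal_lt_ediam (hS (S.equivFin.symm l).2)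
  choose α₀ hα₀ β₀ hβ₀ hαβ₀ using hlong
  -- sort the bars by their midpoints
  let π := Tuple.sort (α₀ + β₀)
  have hbar : Function.Injective (bar ∘ π) :=
    Subtype.coe_injective.comp (S.equivFin.symm.injective.comp π.injective)
  have hmono : Monotone fun l => (α₀ (π l) + β₀ (π l)) / 2 := fun l l' h =>
    div_le_div_of_nonneg_right (Tuple.monotone_sort (α₀ + β₀) h) zero_le_two
  have := card_le_card_add_card_of_exact hf hg hexact heU heW hδ hFU hFW
    (μ := fun l => (α₀ (π l) + β₀ (π l)) / 2) (fun l => by linarith [hαβ₀ (π l)])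
    (fun l => by linarith [hαβ₀ (π l)]) hmono
    (persistentlyIndependent_barcodeGenerator heV hbar (fun l => hα₀ (π l)) fun l => hβ₀ (π l))
  simpa using this

end PersistenceModule

open PersistenceModule

/-- Let `U → V → W` be an exact sequence of persistence modules, each
isomorphic to a direct sum of interval modules.  Then for every `δ > 0`, the number of bars of
`V` of length greater than `2δ` is at most the number of bars of `U` of length greater than
`δ` plus the number of bars of `W` of length greater than `δ`. -/
theorem stmt_9 {k : Type v} [Field k]
    (U V W : PersistenceModule.{u} k)
    (f : ∀ t : ℝ, U.V t →ₗ[k] V.V t) (g : ∀ t : ℝ, V.V t →ₗ[k] W.V t)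
    (hf : ∀ ⦃s t : ℝ⦄ (h : s ≤ t) (x : U.V s), f t (U.map h x) = V.map h (f s x))
    (hg : ∀ ⦃s t : ℝ⦄ (h : s ≤ t) (x : V.V s), g t (V.map h x) = W.map h (g s x))
    (hexact : ∀ t : ℝ, LinearMap.range (f t) = LinearMap.ker (g t))
    {ιU : Type w} {ιV : Type w'} {ιW : Type w''}
    (IU : ιU → Set ℝ) (hIU : ∀ i, (IU i).OrdConnected)
    (IV : ιV → Set ℝ) (hIV : ∀ i, (IV i).OrdConnected)
    (IW : ιW → Set ℝ) (hIW : ∀ i, (IW i).OrdConnected)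
    (hU : PersIso U (barcodeModule k IU hIU))
    (hV : PersIso V (barcodeModule k IV hIV))
    (hW : PersIso W (barcodeModule k IW hIW))
    (δ : ℝ) (hδ : 0 < δ) :
    {i : ιV | ENNReal.ofReal (2 * δ) < EMetric.diam (IV i)}.encard ≤
      {i : ιU | ENNReal.ofReal δ < EMetric.diam (IU i)}.encard +
      {i : ιW | ENNReal.ofReal δ < EMetric.diam (IW i)}.encard := by
  obtain ⟨eU, heU⟩ := hU
  obtain ⟨eV, heV⟩ := hV
  obtain ⟨eW, heW⟩ := hW
  change (longBars IV (2 * δ)).encard ≤ (longBars IU δ).encard + (longBars IW δ).encard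
  obtain hUfin | hUinf := (longBars IU δ).finite_or_infinite
  swap
  · simp [hUinf.encard_eq]
  obtain hWfin | hWinf := (longBars IW δ).finite_or_infinite
  swap
  · simp [hWinf.encard_eq]
  rw [hUfin.encard_eq_coe_toFinset_card, hWfin.encard_eq_coe_toFinset_card, ← Nat.cast_add]
  exact Set.encard_le_of_forall_finset_card_le fun S hS =>
    card_le_card_add_card_of_subset_longBars hf hg hexact heU heV heW hδ.le
      (by simp) (by simp) hS
end

section
/- Let f: ℝ → ℝ be a strictly increasing bijection such that t ≤ f(t) ≤ r_0·t for all t ≥ 0 and f(t) = t for t < 0, for some constant r_0 ≥ 1. Let B be a barcode and let act(B, f^{-1}) be the barcode obtained by applying f to all endpoints of bars of B. Then for every ε > 0 and T > 0: n_{r_0·ε}(tru(act(B, f^{-1}), f(T))) ≤ n_ε(tru(B, T)) ≤ n_ε(tru(act(B, f^{-1}), f(T))), provided additionally that f(t_2) − f(t_1) ≥ t_2 − t_1 and f(t_2) − f(t_1) ≤ r_0(t_2 − t_1) for all 0 ≤ t_1 ≤ t_2. -/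
/-!
On all of `ℝ`, `f` stretches every interval by a factor between `1` and `r₀` (across `0` because
`f` is the identity on negatives and `t ≤ f t ≤ r₀ t` on nonnegatives). So a bar longer than `ε`
stays longer than `ε`, and a bar whose image is longer than `r₀ ε` was longer than `ε`. Since `f`
is monotone, truncating at `T` and then applying `f` is the same as applying `f` and truncating
at `f T`, so the counts compare bar by bar.
-/

open Classical

/-- The extension of a function `f : ℝ → ℝ` to `EReal`, fixing `±∞`. -/
noncomputable def erealMap (f : ℝ → ℝ) : EReal → EReal := fun x =>
  if x = ⊤ then ⊤ else if x = ⊥ then ⊥ else ((f x.toReal : ℝ) : EReal)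

namespace erealMap

variable {f : ℝ → ℝ}

@[simp] lemma top : erealMap f ⊤ = ⊤ := by simp [erealMap]

@[simp] lemma bot : erealMap f ⊥ = ⊥ := by simp [erealMap]

@[simp] lemma coe (r : ℝ) : erealMap f r = (f r : EReal) := by simp [erealMap]

lemma monotone (hf : Monotone f) : Monotone (erealMap f) := by
  intro x y hxy
  induction x using EReal.rec <;> induction y using EReal.rec <;>
    simp_all [EReal.coe_le_coe_iff, hf _]

lemma map_min (hf : Monotone f) (x y : EReal) :
    erealMap f (min x y) = min (erealMap f x) (erealMap f y) :=
  (monotone hf).map_min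

lemma lt_map_sub_of_lt_sub {ε δ : ℝ} (h : ∀ x m : ℝ, ε < m - x → δ < f m - f x)
    (x : ℝ) (m : EReal) (hm : (ε : EReal) < m - x) : (δ : EReal) < erealMap f m - f x := by
  induction m using EReal.rec with
  | bot => simp at hm
  | coe m =>
    rw [coe, ← EReal.coe_sub, EReal.coe_lt_coe_iff] at *
    exact h x m hm
  | top => simp

lemma lt_sub_of_lt_map_sub {ε δ : ℝ} (h : ∀ x m : ℝ, δ < f m - f x → ε < m - x)
    (x : ℝ) (m : EReal) (hm : (δ : EReal) < erealMap f m - f x) : (ε : EReal) < m - x := by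
  induction m using EReal.rec with
  | bot => simp at hm
  | coe m =>
    rw [coe, ← EReal.coe_sub, EReal.coe_lt_coe_iff] at *
    exact h x m hm
  | top => simp

end erealMap

section Expanding

variable {f : ℝ → ℝ} {r₀ : ℝ}

lemma sub_le_map_sub_map (hneg : ∀ t < 0, f t = t) (hbound : ∀ t, 0 ≤ t → t ≤ f t)
    (hlip : ∀ t₁ t₂, 0 ≤ t₁ → t₁ ≤ t₂ → t₂ - t₁ ≤ f t₂ - f t₁) {x y : ℝ} (hxy : x ≤ y) :
    y - x ≤ f y - f x := by
  rcases le_or_gt 0 x with hx | hx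
  · exact hlip x y hx hxy
  rw [hneg x hx]
  rcases le_or_gt 0 y with hy | hy
  · linarith [hbound y hy]
  · rw [hneg y hy]

lemma map_sub_map_le_mul_sub (hr₀ : 1 ≤ r₀) (hneg : ∀ t < 0, f t = t)
    (hbound : ∀ t, 0 ≤ t → f t ≤ r₀ * t)
    (hlip : ∀ t₁ t₂, 0 ≤ t₁ → t₁ ≤ t₂ → f t₂ - f t₁ ≤ r₀ * (t₂ - t₁)) {x y : ℝ} (hxy : x ≤ y) :
    f y - f x ≤ r₀ * (y - x) := by
  rcases le_or_gt 0 x with hx | hx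
  · exact hlip x y hx hxy
  rw [hneg x hx]
  rcases le_or_gt 0 y with hy | hy
  · nlinarith [hbound y hy]
  · rw [hneg y hy]; nlinarith

lemma lt_map_sub_map_of_lt_sub (hf : ∀ x y, x ≤ y → y - x ≤ f y - f x) {ε x m : ℝ}
    (hε : 0 ≤ ε) (h : ε < m - x) : ε < f m - f x :=
  h.trans_le (hf x m (by linarith))

lemma lt_sub_of_mul_lt_map_sub_map (hmono : Monotone f)
    (hf : ∀ x y, x ≤ y → f y - f x ≤ r₀ * (y - x)) (hr₀ : 0 < r₀) {ε x m : ℝ} (hε : 0 ≤ ε)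
    (h : r₀ * ε < f m - f x) : ε < m - x := by
  have hxm : x ≤ m := by
    by_contra! hmx
    linarith [hmono hmx.le, mul_nonneg hr₀.le hε]
  exact lt_of_mul_lt_mul_left (h.trans_le (hf x m hxm)) hr₀.le

end Expanding

theorem stmt_12_general (f : ℝ → ℝ) (r₀ : ℝ) (hr₀ : 1 ≤ r₀)
    (hmono : StrictMono f)
    (hneg : ∀ t : ℝ, t < 0 → f t = t)
    (hbound : ∀ t : ℝ, 0 ≤ t → t ≤ f t ∧ f t ≤ r₀ * t)
    (hlip : ∀ t₁ t₂ : ℝ, 0 ≤ t₁ → t₁ ≤ t₂ →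
      t₂ - t₁ ≤ f t₂ - f t₁ ∧ f t₂ - f t₁ ≤ r₀ * (t₂ - t₁))
    {ι : Type*} (a : ι → ℝ) (b : ι → EReal)
    (ε T : ℝ) (hε : 0 < ε) :
    {i : ι | ((r₀ * ε : ℝ) : EReal) <
        min (erealMap f (b i)) ((f T : ℝ) : EReal) - ((f (a i) : ℝ) : EReal)}.encard ≤
      {i : ι | (ε : EReal) < min (b i) (T : EReal) - (a i : EReal)}.encard ∧
    {i : ι | (ε : EReal) < min (b i) (T : EReal) - (a i : EReal)}.encard ≤
      {i : ι | (ε : EReal) <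
        min (erealMap f (b i)) ((f T : ℝ) : EReal) - ((f (a i) : ℝ) : EReal)}.encard := by
  have hstretch_lo : ∀ x y, x ≤ y → y - x ≤ f y - f x := fun x y =>
    sub_le_map_sub_map hneg (fun t ht => (hbound t ht).1) (fun s t hs => (hlip s t hs · |>.1))
  have hstretch_hi : ∀ x y, x ≤ y → f y - f x ≤ r₀ * (y - x) := fun x y =>
    map_sub_map_le_mul_sub hr₀ hneg (fun t ht => (hbound t ht).2)
      (fun s t hs => (hlip s t hs · |>.2))
  have htrunc : ∀ i, min (erealMap f (b i)) (f T : EReal) = erealMap f (min (b i) T) := fun i => by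
    rw [erealMap.map_min hmono.monotone, erealMap.coe]
  simp only [htrunc]
  constructor <;> refine Set.encard_mono fun i hi => ?_
  · exact erealMap.lt_sub_of_lt_map_sub
      (fun x m => lt_sub_of_mul_lt_map_sub_map hmono.monotone hstretch_hi (by linarith) hε.le) _ _ hi
  · exact erealMap.lt_map_sub_of_lt_sub (fun x m => lt_map_sub_map_of_lt_sub hstretch_lo hε.le) _ _ hi

/-- Let `f : ℝ → ℝ` be a strictly increasing bijection with `t ≤ f t ≤ r₀·t`
for `t ≥ 0` and `f t = t` for `t < 0`, where `r₀ ≥ 1`, and additionally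
`t₂ − t₁ ≤ f t₂ − f t₁ ≤ r₀ (t₂ − t₁)` for `0 ≤ t₁ ≤ t₂`.  Let `B` be a barcode (bars indexed
by `ι`, with endpoints `a i ∈ ℝ`, `b i ∈ ℝ ∪ {±∞}`) and let `act(B, f⁻¹)` be the barcode with
bars `(f (a i), f (b i)]`.  Then for every `ε > 0` and `T > 0`:
`n_{r₀ ε}(tru(act(B,f⁻¹), f T)) ≤ n_ε(tru(B, T)) ≤ n_ε(tru(act(B,f⁻¹), f T))`. -/
theorem stmt_12 (f : ℝ → ℝ) (r₀ : ℝ) (hr₀ : 1 ≤ r₀)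
    (hmono : StrictMono f) (hbij : Function.Bijective f)
    (hneg : ∀ t : ℝ, t < 0 → f t = t)
    (hbound : ∀ t : ℝ, 0 ≤ t → t ≤ f t ∧ f t ≤ r₀ * t)
    (hlip : ∀ t₁ t₂ : ℝ, 0 ≤ t₁ → t₁ ≤ t₂ →
      t₂ - t₁ ≤ f t₂ - f t₁ ∧ f t₂ - f t₁ ≤ r₀ * (t₂ - t₁))
    {ι : Type*} (a : ι → ℝ) (b : ι → EReal)
    (ε T : ℝ) (hε : 0 < ε) (hT : 0 < T) :
    {i : ι | ((r₀ * ε : ℝ) : EReal) <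
        min (erealMap f (b i)) ((f T : ℝ) : EReal) - ((f (a i) : ℝ) : EReal)}.encard ≤
      {i : ι | (ε : EReal) < min (b i) (T : EReal) - (a i : EReal)}.encard ∧
    {i : ι | (ε : EReal) < min (b i) (T : EReal) - (a i : EReal)}.encard ≤
      {i : ι | (ε : EReal) <
        min (erealMap f (b i)) ((f T : ℝ) : EReal) - ((f (a i) : ℝ) : EReal)}.encard :=
  stmt_12_general f r₀ hr₀ hmono hneg hbound hlip a b ε T hε
end

section
/- Let B and B' be barcodes admitting a δ-matching μ: B → B'. Then for every ε > 2δ and every T: n_{ε}(tru(B', T)) ≥ n_{ε + 2δ}(tru(B, T + δ)) − (number of bars of B of length > ε + 2δ not in the coimage of μ), and in particular if the coimage of μ contains all bars of B of length > 2δ, then n_{ε+2δ}(tru(B, T+δ)) ≤ n_ε(tru(B', T + 2δ)). -/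
/-!
A matched bar `[c, d)` starts at most `δ` after its partner `[a, b)` and ends at most `δ` before
it, so truncating `[a, b)` at `T + δ` and `[c, d)` at `T` costs at most `2δ` of length: every bar
of `tru(B, T + δ)` longer than `ε + 2δ` that is matched yields a bar of `tru(B', T)` longer than
`ε`, injectively. Only the unmatched long bars of `B` are lost, and there are none when the
coimage contains every bar longer than `2δ`.
-/

open Set

lemma Set.encard_tsub_encard_sdiff_le {α β : Type*} {s S : Set α} {t : Set β} {f : α → β}
    (hf : MapsTo f (s ∩ S) t) (hinj : InjOn f (s ∩ S)) :
    s.encard - (s \ S).encard ≤ t.encard := by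
  rw [← encard_sdiff_add_encard_inter s S, tsub_le_iff_left]
  gcongr
  exact encard_le_encard_of_injOn hf hinj

namespace EReal

lemma coe_lt_sub_coe_iff {x z : ℝ} {y : EReal} :
    (x : EReal) < y - z ↔ ((x + z : ℝ) : EReal) < y := by
  rw [EReal.lt_sub_iff_add_lt (Or.inl (coe_ne_bot z)) (Or.inl (coe_ne_top z)), coe_add]

lemma lt_sub_of_lt_min_sub {x y z w : EReal} (h : x < min y z - w) : x < y - w :=
  h.trans_le (sub_le_sub (min_le_left _ _) le_rfl)

end EReal

lemma lt_min_sub_of_expansion {a c ε δ T V : ℝ} {b d : EReal} (hca : c - δ ≤ a)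
    (hbd : b ≤ d + δ) (hTV : T ≤ V)
    (h : ((ε + 2 * δ : ℝ) : EReal) < min b ((T + δ : ℝ) : EReal) - a) :
    (ε : EReal) < min d V - c := by
  rw [EReal.coe_lt_sub_coe_iff, lt_min_iff] at h ⊢
  obtain ⟨hb, hT'⟩ := h
  have hT : ε + 2 * δ + a < T + δ := by exact_mod_cast hT'
  refine ⟨?_, by exact_mod_cast (by linarith : ε + c < V)⟩
  calc ((ε + c : ℝ) : EReal) ≤ ((ε + 2 * δ + a - δ : ℝ) : EReal) := by
        exact_mod_cast (by linarith : ε + c ≤ ε + 2 * δ + a - δ)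
    _ < b - δ := EReal.coe_lt_sub_coe_iff.mpr (by simpa using hb)
    _ ≤ d := EReal.sub_le_of_le_add hbd

theorem stmt_18_general {ι ι' : Type*}
    (a : ι → ℝ) (b : ι → EReal) (c : ι' → ℝ) (d : ι' → EReal)
    (δ : ℝ) (hδ : 0 < δ)
    (S : Set ι) (S' : Set ι') (e : ι → ι') (he : Set.BijOn e S S')
    (hcoim : ∀ i : ι, ((2 * δ : ℝ) : EReal) < b i - (a i : EReal) → i ∈ S)
    (hmatch : ∀ i ∈ S,
      c (e i) - δ ≤ a i ∧ a i - δ ≤ c (e i) ∧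
      b i ≤ d (e i) + (δ : EReal) ∧ d (e i) ≤ b i + (δ : EReal))
    (ε T : ℝ) (hε : 2 * δ < ε) :
    {i : ι | ((ε + 2 * δ : ℝ) : EReal) <
        min (b i) ((T + δ : ℝ) : EReal) - (a i : EReal)}.encard -
      {i : ι | ((ε + 2 * δ : ℝ) : EReal) < b i - (a i : EReal) ∧ i ∉ S}.encard ≤
        {j : ι' | (ε : EReal) < min (d j) (T : EReal) - (c j : EReal)}.encard ∧
    {i : ι | ((ε + 2 * δ : ℝ) : EReal) <
        min (b i) ((T + δ : ℝ) : EReal) - (a i : EReal)}.encard ≤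
      {j : ι' | (ε : EReal) < min (d j) ((T + 2 * δ : ℝ) : EReal) - (c j : EReal)}.encard := by
  set A :=
    {i : ι | ((ε + 2 * δ : ℝ) : EReal) < min (b i) ((T + δ : ℝ) : EReal) - (a i : EReal)}
  have hmaps {V : ℝ} (hTV : T ≤ V) {s : Set ι} (hs : s ⊆ A ∩ S) :
      MapsTo e s {j | (ε : EReal) < min (d j) V - (c j : EReal)} := fun i hi ↦
    lt_min_sub_of_expansion (hmatch i (hs hi).2).1 (hmatch i (hs hi).2).2.2.1 hTV (hs hi).1
  have hAS : A ⊆ S := fun i hi ↦ hcoim i <| lt_of_le_of_lt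
    (by exact_mod_cast (by linarith : 2 * δ ≤ ε + 2 * δ)) (EReal.lt_sub_of_lt_min_sub hi)
  constructor
  · refine (tsub_le_tsub_left (encard_le_encard ?_) _).trans
      (encard_tsub_encard_sdiff_le (hmaps le_rfl subset_rfl) (he.injOn.mono inter_subset_right))
    exact fun i hi ↦ ⟨EReal.lt_sub_of_lt_min_sub hi.1, hi.2⟩
  · exact encard_le_encard_of_injOn (hmaps (by linarith) (subset_inter subset_rfl hAS))
      (he.injOn.mono hAS)

/-- Let `B` and `B'` be barcodes (bars indexed by `ι`, `ι'`, with left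
endpoints `a, c` and right endpoints `b, d`) admitting a `δ`-matching `μ` (a partial
bijection, with coimage `S` and image `S'`, whose coimage/image contain all bars of length
`> 2δ` and whose matched bars lie in each other's `δ`-expansions).  Then for every `ε > 2δ`
and every `T`:
`n_{ε+2δ}(tru(B, T+δ)) − #{bars of B of length > ε+2δ not in the coimage} ≤ n_ε(tru(B', T))`,
and moreover `n_{ε+2δ}(tru(B, T+δ)) ≤ n_ε(tru(B', T+2δ))`. -/
theorem stmt_18 {ι ι' : Type*}
    (a : ι → ℝ) (b : ι → EReal) (c : ι' → ℝ) (d : ι' → EReal)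
    (δ : ℝ) (hδ : 0 < δ)
    (S : Set ι) (S' : Set ι') (e : ι → ι') (he : Set.BijOn e S S')
    (hcoim : ∀ i : ι, ((2 * δ : ℝ) : EReal) < b i - (a i : EReal) → i ∈ S)
    (him : ∀ j : ι', ((2 * δ : ℝ) : EReal) < d j - (c j : EReal) → j ∈ S')
    (hmatch : ∀ i ∈ S,
      c (e i) - δ ≤ a i ∧ a i - δ ≤ c (e i) ∧
      b i ≤ d (e i) + (δ : EReal) ∧ d (e i) ≤ b i + (δ : EReal))
    (ε T : ℝ) (hε : 2 * δ < ε) :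
    {i : ι | ((ε + 2 * δ : ℝ) : EReal) <
        min (b i) ((T + δ : ℝ) : EReal) - (a i : EReal)}.encard -
      {i : ι | ((ε + 2 * δ : ℝ) : EReal) < b i - (a i : EReal) ∧ i ∉ S}.encard ≤
        {j : ι' | (ε : EReal) < min (d j) (T : EReal) - (c j : EReal)}.encard ∧
    {i : ι | ((ε + 2 * δ : ℝ) : EReal) <
        min (b i) ((T + δ : ℝ) : EReal) - (a i : EReal)}.encard ≤
      {j : ι' | (ε : EReal) < min (d j) ((T + 2 * δ : ℝ) : EReal) - (c j : EReal)}.encard :=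
  stmt_18_general a b c d δ hδ S S' e he hcoim hmatch ε T hε
end
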